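/- arXiv:math/0409463 — 3 statements merged into one kernel-verified Lean document; each statement's English description precedes it below -/
import Mathlib

section
/- For every integer i, the ribbon Schur operators satisfy u_{i+n} u_i u_{i+n} = 0 and u_i u_{i+n} u_i = 0. -/
open scoped Classical

noncomputable section RibbonSchur

/-- The base field `ℂ(q)` of rational functions. -/
abbrev K : Type := RatFunc ℂ

/-- The variable `q`. -/
def q : K := RatFunc.X

/-- The Fock space: free `K`-module on the set of partitions (Young diagrams). -/
abbrev F : Type := YoungDiagram →₀ K

/-- Cells of the skew shape `mu / lam`. -/
def skewCells (lam mu : YoungDiagram) : Finset (ℕ × ℕ) := mu.cells \ lam.cells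

/-- Two cells are adjacent if they share an edge. -/
def CellAdj (a b : ℕ × ℕ) : Prop :=
  (a.1 = b.1 ∧ (a.2 = b.2 + 1 ∨ b.2 = a.2 + 1)) ∨
  (a.2 = b.2 ∧ (a.1 = b.1 + 1 ∨ b.1 = a.1 + 1))

/-- `mu / lam` is an `n`-ribbon with head (top-right box, of maximal content) on diagonal `i`:
a connected skew shape of size `n` containing no `2 × 2` square. -/
def IsRibbon (n : ℕ) (lam mu : YoungDiagram) (i : ℤ) : Prop :=
  lam ≤ mu ∧ (skewCells lam mu).card = n ∧
  (∀ a ∈ skewCells lam mu, ∀ b ∈ skewCells lam mu,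
    Relation.ReflTransGen
      (fun x y => x ∈ skewCells lam mu ∧ y ∈ skewCells lam mu ∧ CellAdj x y) a b) ∧
  (¬ ∃ r c : ℕ, (r, c) ∈ skewCells lam mu ∧ (r + 1, c) ∈ skewCells lam mu ∧
      (r, c + 1) ∈ skewCells lam mu ∧ (r + 1, c + 1) ∈ skewCells lam mu) ∧
  (∃ p ∈ skewCells lam mu, (p.2 : ℤ) - (p.1 : ℤ) = i ∧
    ∀ p' ∈ skewCells lam mu, (p'.2 : ℤ) - (p'.1 : ℤ) ≤ (p.2 : ℤ) - (p.1 : ℤ))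

/-- The spin of the skew shape `mu / lam`: number of occupied rows minus 1. -/
def spin (lam mu : YoungDiagram) : ℕ := ((skewCells lam mu).image Prod.fst).card - 1

/-- The spin, as an integer. -/
def spinZ (lam mu : YoungDiagram) : ℤ := (((skewCells lam mu).image Prod.fst).card : ℤ) - 1

/-- The image of the basis vector `lam` under the ribbon Schur operator `u_i`. -/
def uVec (n : ℕ) (i : ℤ) (lam : YoungDiagram) : F :=
  if h : ∃ mu, IsRibbon n lam mu i then
    q ^ spin lam (Classical.choose h) • Finsupp.single (Classical.choose h) 1
  else 0

/-- The ribbon Schur operator `u_i`, adding an `n`-ribbon with head on diagonal `i`,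
weighted by `q ^ spin`. -/
def u (n : ℕ) (i : ℤ) : Module.End K F :=
  Finsupp.lsum K fun lam => LinearMap.toSpanSingleton K F (uVec n i lam)

/-- The image of the basis vector `lam` under the adjoint operator `d_i`. -/
def dVec (n : ℕ) (i : ℤ) (lam : YoungDiagram) : F :=
  if h : ∃ mu, IsRibbon n mu lam i then
    q ^ spin (Classical.choose h) lam • Finsupp.single (Classical.choose h) 1
  else 0

/-- The adjoint `d_i` of the ribbon Schur operator `u_i` (with respect to the inner
product making partitions orthonormal): it removes an `n`-ribbon with head on diagonal `i`. -/
def d (n : ℕ) (i : ℤ) : Module.End K F :=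
  Finsupp.lsum K fun lam => LinearMap.toSpanSingleton K F (dVec n i lam)

/-- The monomial `u_{i_k} ⋯ u_{i_1}` for the list `l = [i_k, …, i_1]` (leftmost factor
applied last). -/
def ribbonMonomial (n : ℕ) (l : List ℤ) : Module.End K F := (l.map (u n)).prod

/-- The monomial `d_{i_1} ⋯ d_{i_k}` for the list `l = [i_1, …, i_k]`. -/
def dMonomial (n : ℕ) (l : List ℤ) : Module.End K F := (l.map (d n)).prod

/-- The image of the basis vector `lam` under
`h_k(u) = ∑_{i_1 < ⋯ < i_k} u_{i_k} ⋯ u_{i_1}` (a locally finite sum). -/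
def hVec (n k : ℕ) (lam : YoungDiagram) : F :=
  ∑ᶠ l : List ℤ,
    if l.Pairwise (· > ·) ∧ l.length = k then ribbonMonomial n l (Finsupp.single lam 1) else 0

/-- The noncommutative homogeneous symmetric function
`h_k(u) = ∑_{i_1 < ⋯ < i_k} u_{i_k} ⋯ u_{i_1}` in the ribbon Schur operators. -/
def hOp (n k : ℕ) : Module.End K F :=
  Finsupp.lsum K fun lam => LinearMap.toSpanSingleton K F (hVec n k lam)

/-- The image of the basis vector `lam` under
`h_k^⊥(u) = ∑_{i_1 < ⋯ < i_k} d_{i_1} ⋯ d_{i_k}`. -/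
def hPerpVec (n k : ℕ) (lam : YoungDiagram) : F :=
  ∑ᶠ l : List ℤ,
    if l.Pairwise (· < ·) ∧ l.length = k then dMonomial n l (Finsupp.single lam 1) else 0

/-- The adjoint `h_k^⊥(u) = ∑_{i_1 < ⋯ < i_k} d_{i_1} ⋯ d_{i_k}`,
removing a horizontal ribbon strip of size `k`. -/
def hPerp (n k : ℕ) : Module.End K F :=
  Finsupp.lsum K fun lam => LinearMap.toSpanSingleton K F (hPerpVec n k lam)



namespace RibbonAux

open Finset

/-- Diagonal (content) of a cell. -/
def dg (p : ℕ × ℕ) : ℤ := (p.2 : ℤ) - (p.1 : ℤ)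

/-- The cells of `lam` on diagonal `d`. -/
def diagF (lam : YoungDiagram) (d : ℤ) : Finset (ℕ × ℕ) :=
  lam.cells.filter (fun p => dg p = d)

/-- Adjusted diagonal profile: row index of the first addable cell on diagonal `d`. -/
noncomputable def tprof (lam : YoungDiagram) (d : ℤ) : ℤ :=
  max 0 (-d) + ((diagF lam d).card : ℤ)

lemma tprof_ge (lam : YoungDiagram) (d : ℤ) : max 0 (-d) ≤ tprof lam d := by
  have : (0:ℤ) ≤ ((diagF lam d).card : ℤ) := Int.natCast_nonneg _
  unfold tprof; omega

/-- Rows occupied on diagonal `d`. -/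
def rowsF (lam : YoungDiagram) (d : ℤ) : Finset ℕ := (diagF lam d).image Prod.fst

lemma card_rowsF (lam : YoungDiagram) (d : ℤ) : (rowsF lam d).card = (diagF lam d).card := by
  apply Finset.card_image_of_injOn
  intro p hp q hq h
  simp only [diagF, Finset.mem_coe, Finset.mem_filter] at hp hq
  have h1 : dg p = d := hp.2
  have h2 : dg q = d := hq.2
  unfold dg at h1 h2
  have : p.2 = q.2 := by omega
  exact Prod.ext h this

lemma mem_rowsF {lam : YoungDiagram} {d : ℤ} {r : ℕ} :
    r ∈ rowsF lam d ↔ ∃ c : ℕ, (r, c) ∈ lam ∧ (c : ℤ) - r = d := by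
  constructor
  · intro h
    obtain ⟨p, hp, hr⟩ := Finset.mem_image.mp h
    simp only [diagF, Finset.mem_filter] at hp
    exact ⟨p.2, by rw [← hr, Prod.mk.eta]; exact hp.1, by have := hp.2; unfold dg at this; omega⟩
  · rintro ⟨c, hc, hd⟩
    exact Finset.mem_image.mpr ⟨(r, c), Finset.mem_filter.mpr ⟨hc, by unfold dg; omega⟩, rfl⟩

lemma rows_down {lam : YoungDiagram} {d : ℤ} {r r' : ℕ} (hr : r ∈ rowsF lam d)
    (h1 : -d ≤ (r' : ℤ)) (h2 : r' ≤ r) : r' ∈ rowsF lam d := by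
  obtain ⟨c, hc, hd⟩ := mem_rowsF.mp hr
  set c' : ℕ := ((r' : ℤ) + d).toNat with hc'def
  have hc' : (c' : ℤ) = (r' : ℤ) + d := Int.toNat_of_nonneg (by omega)
  refine mem_rowsF.mpr ⟨c', lam.up_left_mem h2 (show c' ≤ c by omega) hc, by omega⟩

lemma rows_lb {lam : YoungDiagram} {d : ℤ} {r : ℕ} (hr : r ∈ rowsF lam d) : -d ≤ (r : ℤ) := by
  obtain ⟨c, _, hd⟩ := mem_rowsF.mp hr
  omega

lemma rows_eq (lam : YoungDiagram) (d : ℤ) :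
    rowsF lam d = Finset.Ico ((-d).toNat) ((-d).toNat + (diagF lam d).card) := by
  set r0 : ℕ := (-d).toNat with hr0def
  have hr0 : (r0 : ℤ) = max (-d) 0 := by rw [hr0def]; exact_mod_cast Int.toNat_eq_max (-d)
  have hsub : Finset.Ico r0 (r0 + (diagF lam d).card) ⊆ rowsF lam d := by
    intro r hr
    rw [Finset.mem_Ico] at hr
    by_contra hrS
    have hss : rowsF lam d ⊆ Finset.Ico r0 r := by
      intro s hs
      rw [Finset.mem_Ico]
      have hlb := rows_lb hs
      constructor
      · omega
      · by_contra hsr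
        exact hrS (rows_down hs (by omega) (by omega))
    have := Finset.card_le_card hss
    rw [Nat.card_Ico] at this
    rw [card_rowsF] at this
    omega
  have hcard : (rowsF lam d).card ≤ (Finset.Ico r0 (r0 + (diagF lam d).card)).card := by
    rw [Nat.card_Ico, card_rowsF]; omega
  exact (Finset.eq_of_subset_of_card_le hsub hcard).symm

/-- Main membership characterization: a cell on diagonal `d` lies in `lam` iff its row is
below the profile. -/
lemma mem_tprof {lam : YoungDiagram} {d : ℤ} {p : ℕ × ℕ} (hp : dg p = d) :
    p ∈ lam ↔ (p.1 : ℤ) < tprof lam d := by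
  have hr0 : (((-d).toNat : ℕ) : ℤ) = max (-d) 0 := by exact_mod_cast Int.toNat_eq_max (-d)
  have hd2 : (p.2 : ℤ) = (p.1 : ℤ) + d := by unfold dg at hp; omega
  constructor
  · intro h
    have : p.1 ∈ rowsF lam d := mem_rowsF.mpr ⟨p.2, by rw [Prod.mk.eta]; exact h, by omega⟩
    rw [rows_eq, Finset.mem_Ico] at this
    unfold tprof
    omega
  · intro h
    have hmem : p.1 ∈ rowsF lam d := by
      rw [rows_eq, Finset.mem_Ico]
      unfold tprof at h
      omega
    obtain ⟨c, hc, hcd⟩ := mem_rowsF.mp hmem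
    have : c = p.2 := by omega
    rw [← Prod.mk.eta (p := p), ← this]
    exact hc

lemma not_mem_tprof {lam : YoungDiagram} {d : ℤ} {p : ℕ × ℕ} (hp : dg p = d) (h : p ∉ lam) :
    tprof lam d ≤ (p.1 : ℤ) := by
  by_contra hc
  exact h ((mem_tprof hp).mpr (by omega))

/-- If the diagonal is non-trivially occupied, there is a top cell at row `tprof - 1`. -/
lemma exists_top {lam : YoungDiagram} {d : ℤ} (h : max 0 (-d) < tprof lam d) :
    ∃ p : ℕ × ℕ, dg p = d ∧ p ∈ lam ∧ (p.1 : ℤ) = tprof lam d - 1 := by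
  have h0 : (0:ℤ) ≤ tprof lam d - 1 := by have := le_max_left (0:ℤ) (-d); omega
  have hd : -d ≤ tprof lam d - 1 := by have := le_max_right (0:ℤ) (-d); omega
  set r : ℕ := (tprof lam d - 1).toNat with hrdef
  have hr : (r : ℤ) = tprof lam d - 1 := Int.toNat_of_nonneg h0
  set c : ℕ := ((r : ℤ) + d).toNat with hcdef
  have hc : (c : ℤ) = (r : ℤ) + d := Int.toNat_of_nonneg (by omega)
  refine ⟨(r, c), by unfold dg; omega, (mem_tprof (d := d) (by unfold dg; omega)).mpr ?_, by simpa⟩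
  show ((r:ℕ) : ℤ) < tprof lam d
  omega

/-- Partition profile constraint, upward direction. -/
lemma tprof_succ_le (lam : YoungDiagram) (d : ℤ) :
    tprof lam (d + 1) ≤ max (tprof lam d) (-d) := by
  have hml := le_max_left (tprof lam d) (-d)
  have hmr := le_max_right (tprof lam d) (-d)
  have hg0 : (0:ℤ) ≤ tprof lam d := le_trans (le_max_left _ _) (tprof_ge lam d)
  by_cases h : max 0 (-(d+1)) < tprof lam (d + 1)
  · obtain ⟨p, hdg, hmem, hr⟩ := exists_top h
    by_cases hc : p.2 = 0
    · unfold dg at hdg; omega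
    · have hq : (p.1, p.2 - 1) ∈ lam := lam.up_left_mem le_rfl (Nat.sub_le _ _)
        (by rw [Prod.mk.eta]; exact hmem)
      have hqd : dg (p.1, p.2 - 1) = d := by unfold dg at hdg ⊢; simp only; omega
      have := (mem_tprof hqd).mp hq
      simp only at this
      omega
  · have h1 := tprof_ge lam (d+1)
    have h2 := le_max_left (0:ℤ) (-(d+1))
    have h3 := le_max_right (0:ℤ) (-(d+1))
    have h4 : max 0 (-(d+1)) ≤ -(d+1) ∨ max 0 (-(d+1)) ≤ 0 := by
      rcases max_cases (0:ℤ) (-(d+1)) with ⟨he, _⟩ | ⟨he, _⟩ <;> omega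
    omega

/-- Partition profile constraint, downward direction. -/
lemma tprof_le_succ (lam : YoungDiagram) (d : ℤ) :
    tprof lam d ≤ max (tprof lam (d + 1) + 1) (-d) := by
  have hml := le_max_left (tprof lam (d+1) + 1) (-d)
  have hmr := le_max_right (tprof lam (d+1) + 1) (-d)
  have hg1 : (0:ℤ) ≤ tprof lam (d+1) := le_trans (le_max_left _ _) (tprof_ge lam (d+1))
  by_cases h : max 0 (-d) < tprof lam d
  · obtain ⟨p, hdg, hmem, hr⟩ := exists_top h
    by_cases hc : p.1 = 0
    · omega
    · have hq : (p.1 - 1, p.2) ∈ lam := lam.up_left_mem (Nat.sub_le _ _) le_rfl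
        (by rw [Prod.mk.eta]; exact hmem)
      have hqd : dg (p.1 - 1, p.2) = d + 1 := by unfold dg at hdg ⊢; simp only; omega
      have := (mem_tprof hqd).mp hq
      simp only at this
      omega
  · have h4 : max 0 (-d) ≤ -d ∨ max 0 (-d) ≤ 0 := by
      rcases max_cases (0:ℤ) (-d) with ⟨he, _⟩ | ⟨he, _⟩ <;> omega
    omega


lemma dg_adj {x y : ℕ × ℕ} (h : CellAdj x y) : dg y = dg x + 1 ∨ dg y = dg x - 1 := by
  unfold CellAdj at h
  unfold dg
  omega

lemma path_interval {S : Finset (ℕ × ℕ)} {a b : ℕ × ℕ}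
    (h : Relation.ReflTransGen (fun x y => x ∈ S ∧ y ∈ S ∧ CellAdj x y) a b) (ha : a ∈ S) :
    ∀ d : ℤ, dg a ≤ d → d ≤ dg b → ∃ p ∈ S, dg p = d := by
  induction h with
  | refl => exact fun d h1 h2 => ⟨a, ha, by omega⟩
  | @tail b' c _ hbc ih =>
    intro d h1 h2
    rcases dg_adj hbc.2.2 with hd | hd
    · by_cases hle : d ≤ dg b'
      · exact ih d h1 hle
      · exact ⟨c, hbc.2.1, by omega⟩
    · exact ih d h1 (by omega)

section Ribbon

variable {n : ℕ} {lam mu : YoungDiagram} {j : ℤ}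

lemma skew_mem {p : ℕ × ℕ} : p ∈ skewCells lam mu ↔ p ∈ mu ∧ p ∉ lam := by
  simp [skewCells, Finset.mem_sdiff]

lemma sq_helper (_hle : lam ≤ mu) {p Q : ℕ × ℕ} (hp : p ∈ skewCells lam mu)
    (hQ : Q ∈ skewCells lam mu) (hd : dg p = dg Q) (hlt : p.1 < Q.1) :
    ∃ r c : ℕ, (r, c) ∈ skewCells lam mu ∧ (r + 1, c) ∈ skewCells lam mu ∧
      (r, c + 1) ∈ skewCells lam mu ∧ (r + 1, c + 1) ∈ skewCells lam mu := by
  rw [skew_mem] at hp hQ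
  have hd' : (p.2 : ℤ) - p.1 = (Q.2 : ℤ) - Q.1 := hd
  have key : ∀ a b : ℕ, p.1 ≤ a → a ≤ Q.1 → p.2 ≤ b → b ≤ Q.2 → (a, b) ∈ skewCells lam mu := by
    intro a b h1 h2 h3 h4
    rw [skew_mem]
    refine ⟨mu.up_left_mem h2 h4 (by rw [Prod.mk.eta]; exact hQ.1), fun hl => hp.2 ?_⟩
    rw [← Prod.mk.eta (p := p)]
    exact lam.up_left_mem h1 h3 hl
  exact ⟨p.1, p.2, key _ _ le_rfl (by omega) le_rfl (by omega),
    key _ _ (by omega) (by omega) le_rfl (by omega),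
    key _ _ le_rfl (by omega) (by omega) (by omega),
    key _ _ (by omega) (by omega) (by omega) (by omega)⟩

/-- All facts we need from a ribbon, packaged together. -/
lemma ribbon_props (hn : 1 ≤ n) (hR : IsRibbon n lam mu j) :
    (∀ d : ℤ, tprof mu d = tprof lam d + (if j - n < d ∧ d ≤ j then 1 else 0)) ∧
    tprof lam (j - n + 1) + 1 ≤ tprof lam (j - n) ∧ tprof lam j ≤ tprof lam (j + 1) := by
  obtain ⟨hle, hcard, hconn, h2x2, p0, hp0, hp0d, hmax⟩ := hR
  have hd0 : dg p0 = j := hp0d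
  have hmax' : ∀ p ∈ skewCells lam mu, dg p ≤ j := fun p hp => by
    have := hmax p hp
    unfold dg
    omega
  clear hmax hp0d
  set S := skewCells lam mu with hSdef
  -- injectivity of the diagonal map on S
  have hinj : ∀ p ∈ S, ∀ Q ∈ S, dg p = dg Q → p = Q := by
    intro p hp Q hQ hd
    by_contra hne
    have hne1 : p.1 ≠ Q.1 := by
      intro h1
      apply hne
      have : p.2 = Q.2 := by unfold dg at hd; omega
      exact Prod.ext h1 this
    rcases Nat.lt_or_ge p.1 Q.1 with h | h
    · exact h2x2 (sq_helper hle hp hQ hd h)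
    · exact h2x2 (sq_helper hle hQ hp hd.symm (by omega))
  -- the image of diagonals
  set D : Finset ℤ := S.image dg with hDdef
  have hcardD : D.card = n := by
    rw [hDdef, Finset.card_image_of_injOn (fun p hp Q hQ => hinj p hp Q hQ), hcard]
  have hDle : ∀ e ∈ D, e ≤ j := by
    rintro e he
    obtain ⟨p, hp, rfl⟩ := Finset.mem_image.mp he
    exact hmax' p hp
  -- lower bound on diagonals
  have hlb : ∀ p ∈ S, j - n < dg p := by
    intro p hp
    by_contra hc
    have hsub : Finset.Icc (dg p) j ⊆ D := by
      intro e he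
      rw [Finset.mem_Icc] at he
      obtain ⟨q, hq, hqd⟩ := path_interval (hconn p hp p0 hp0) hp e he.1 (by rw [hd0]; omega)
      exact Finset.mem_image.mpr ⟨q, hq, hqd⟩
    have hc1 := Finset.card_le_card hsub
    rw [Int.card_Icc, hcardD] at hc1
    have : j + 1 - dg p ≤ (n : ℤ) := by
      by_contra hgt
      have h2 : ((n : ℕ) : ℤ) < ((j + 1 - dg p).toNat : ℤ) := by
        rw [Int.toNat_of_nonneg (by omega)]; omega
      exact absurd hc1 (by omega)
    omega
  -- existence on each diagonal in range
  have hItv : ∀ d : ℤ, j - n < d → d ≤ j → ∃ p ∈ S, dg p = d := by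
    intro d h1 h2
    have hex : ∃ q ∈ S, dg q ≤ d := by
      by_contra hc
      push_neg at hc
      have hsub : D ⊆ Finset.Ioc d j := by
        rintro e he
        obtain ⟨p, hp, rfl⟩ := Finset.mem_image.mp he
        exact Finset.mem_Ioc.mpr ⟨hc p hp, hmax' p hp⟩
      have hc1 := Finset.card_le_card hsub
      rw [Int.card_Ioc, hcardD] at hc1
      have h2' : ((j - d).toNat : ℤ) ≤ j - d ∨ ((j - d).toNat : ℤ) = 0 := by
        rcases le_or_gt 0 (j - d) with h | h
        · left; rw [Int.toNat_of_nonneg h]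
        · right; simp [Int.toNat_of_nonpos (by omega)]
      omega
    obtain ⟨q, hq, hqd⟩ := hex
    exact path_interval (hconn q hq p0 hp0) hq d hqd (by rw [hd0]; omega)
  -- diagonal counts
  have hcount : ∀ d : ℤ, ((diagF mu d).card : ℤ) =
      ((diagF lam d).card : ℤ) + (if j - n < d ∧ d ≤ j then 1 else 0) := by
    intro d
    have hsplit : diagF mu d = diagF lam d ∪ S.filter (fun p => dg p = d) := by
      rw [hSdef]
      unfold diagF skewCells
      rw [← Finset.filter_union]
      congr 1
      exact (Finset.union_sdiff_of_subset hle).symm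
    have hdisj : Disjoint (diagF lam d) (S.filter (fun p => dg p = d)) := by
      unfold diagF
      apply Finset.disjoint_filter_filter
      rw [hSdef]
      unfold skewCells
      exact Finset.disjoint_sdiff
    rw [hsplit, Finset.card_union_of_disjoint hdisj]
    by_cases hd : j - n < d ∧ d ≤ j
    · obtain ⟨p, hp, hpd⟩ := hItv d hd.1 hd.2
      have : S.filter (fun p => dg p = d) = {p} := by
        apply Finset.eq_singleton_iff_unique_mem.mpr
        refine ⟨Finset.mem_filter.mpr ⟨hp, hpd⟩, fun q hq => ?_⟩
        rw [Finset.mem_filter] at hq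
        exact hinj q hq.1 p hp (by rw [hq.2, hpd])
      rw [this, if_pos hd]
      simp
    · have : S.filter (fun p => dg p = d) = ∅ := by
        rw [Finset.filter_eq_empty_iff]
        intro q hq
        have h1 := hlb q hq
        have h2 := hmax' q hq
        omega
      rw [this, if_neg hd]
      simp
  refine ⟨fun d => by unfold tprof; rw [hcount d]; ring, ?_, ?_⟩
  -- tail inequality
  · obtain ⟨p, hp, hpd⟩ := hItv (j - n + 1) (by omega) (by omega)
    rw [skew_mem] at hp
    have h1 : tprof lam (j - n + 1) ≤ (p.1 : ℤ) := not_mem_tprof hpd hp.2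
    by_cases hc : p.2 = 0
    · have hpr : (p.1 : ℤ) = n - 1 - j := by unfold dg at hpd; omega
      have ha : -(j - n) ≤ tprof lam (j - n) := le_trans (le_max_right _ _) (tprof_ge _ _)
      omega
    · have hq : (p.1, p.2 - 1) ∈ mu := mu.up_left_mem le_rfl (Nat.sub_le _ _)
        (by rw [Prod.mk.eta]; exact hp.1)
      have hqd : dg (p.1, p.2 - 1) = j - n := by unfold dg at hpd ⊢; simp only; omega
      have hqS : (p.1, p.2 - 1) ∉ S := by
        intro hmem
        have := hlb _ hmem
        omega
      have hql : (p.1, p.2 - 1) ∈ lam := by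
        by_contra hnl
        exact hqS (skew_mem.mpr ⟨hq, hnl⟩)
      have := (mem_tprof hqd).mp hql
      simp only at this
      omega
  -- head inequality
  · have h1 : tprof lam j ≤ (p0.1 : ℤ) := by
      rw [skew_mem] at hp0
      exact not_mem_tprof hd0 hp0.2
    by_cases hc : p0.1 = 0
    · have := le_trans (le_max_left _ _) (tprof_ge lam (j + 1))
      omega
    · have hq : (p0.1 - 1, p0.2) ∈ mu := mu.up_left_mem (Nat.sub_le _ _) le_rfl
        (by rw [Prod.mk.eta]; exact (skew_mem.mp hp0).1)
      have hqd : dg (p0.1 - 1, p0.2) = j + 1 := by unfold dg at hd0 ⊢; simp only; omega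
      have hqS : (p0.1 - 1, p0.2) ∉ S := by
        intro hmem
        have := hmax' _ hmem
        unfold dg at this
        simp only at this
        unfold dg at hd0
        omega
      have hql : (p0.1 - 1, p0.2) ∈ lam := by
        by_contra hnl
        exact hqS (skew_mem.mpr ⟨hq, hnl⟩)
      have := (mem_tprof hqd).mp hql
      simp only at this
      omega

end Ribbon

/-- `u_i u_{i+n} u_i = 0`, combinatorial core. -/
lemma T1 {n : ℕ} (hn : 1 ≤ n) {lam mu nu rho : YoungDiagram} {i : ℤ}
    (h1 : IsRibbon n lam mu i) (h2 : IsRibbon n mu nu (i + n)) (h3 : IsRibbon n nu rho i) :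
    False := by
  obtain ⟨c1, t1, -⟩ := ribbon_props hn h1
  obtain ⟨c2, -, -⟩ := ribbon_props hn h2
  obtain ⟨-, t3, -⟩ := ribbon_props hn h3
  have hn' : (1 : ℤ) ≤ (n : ℤ) := by exact_mod_cast hn
  have p1 : ¬(i - (n:ℤ) < i - n ∧ i - n ≤ i) := by omega
  have p2 : ¬(i + (n:ℤ) - n < i - n ∧ i - n ≤ i + n) := by omega
  have p3 : (i - (n:ℤ) < i - n + 1 ∧ i - n + 1 ≤ i) := by omega
  have p4 : ¬(i + (n:ℤ) - n < i - n + 1 ∧ i - n + 1 ≤ i + n) := by omega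
  have eqa : tprof nu (i - n) = tprof lam (i - n) := by
    rw [c2 (i - n), c1 (i - n), if_neg p1, if_neg p2]
    ring
  have eqb : tprof nu (i - n + 1) = tprof lam (i - n + 1) + 1 := by
    rw [c2 (i - n + 1), c1 (i - n + 1), if_pos p3, if_neg p4]
    ring
  rw [eqa, eqb] at t3
  have L := tprof_le_succ lam (i - n)
  rw [le_max_iff] at L
  have hg0 : (0:ℤ) ≤ tprof lam (i - n + 1) := le_trans (le_max_left _ _) (tprof_ge _ _)
  have hg1 : -(i - n + 1) ≤ tprof lam (i - n + 1) := le_trans (le_max_right _ _) (tprof_ge _ _)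
  have he : i - n + 1 = (i - n) + 1 := by ring
  rw [he] at L
  omega

/-- `u_{i+n} u_i u_{i+n} = 0`, combinatorial core. -/
lemma T2 {n : ℕ} (hn : 1 ≤ n) {lam mu nu rho : YoungDiagram} {i : ℤ}
    (h1 : IsRibbon n lam mu (i + n)) (h2 : IsRibbon n mu nu i) (h3 : IsRibbon n nu rho (i + n)) :
    False := by
  obtain ⟨c1, -, hd1⟩ := ribbon_props hn h1
  obtain ⟨c2, -, -⟩ := ribbon_props hn h2
  obtain ⟨-, -, hd3⟩ := ribbon_props hn h3
  have hn' : (1 : ℤ) ≤ (n : ℤ) := by exact_mod_cast hn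
  have p1 : ¬(i - (n:ℤ) < i + n + 1 ∧ i + n + 1 ≤ i) := by omega
  have p2 : ¬(i + (n:ℤ) - n < i + n + 1 ∧ i + n + 1 ≤ i + n) := by omega
  have p3 : ¬(i - (n:ℤ) < i + n ∧ i + n ≤ i) := by omega
  have p4 : (i + (n:ℤ) - n < i + n ∧ i + n ≤ i + n) := by omega
  have eqa : tprof nu (i + n + 1) = tprof lam (i + n + 1) := by
    rw [c2 (i + n + 1), c1 (i + n + 1), if_neg p1, if_neg p2]
    ring
  have eqb : tprof nu (i + n) = tprof lam (i + n) + 1 := by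
    rw [c2 (i + n), c1 (i + n), if_neg p3, if_pos p4]
    ring
  rw [eqa, eqb] at hd3
  have L := tprof_succ_le lam (i + n)
  rw [le_max_iff] at L
  have hg1 : -(i + n) ≤ tprof lam (i + n) := le_trans (le_max_right _ _) (tprof_ge _ _)
  omega

lemma u_single (n : ℕ) (jj : ℤ) (lam : YoungDiagram) :
    u n jj (Finsupp.single lam 1) = uVec n jj lam := by
  unfold u
  rw [Finsupp.lsum_single, LinearMap.toSpanSingleton_apply_one]

lemma triple_zero (n : ℕ) (j1 j2 j3 : ℤ)
    (H : ∀ lam mu nu : YoungDiagram, IsRibbon n lam mu j3 → IsRibbon n mu nu j2 →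
      ∀ rho, ¬ IsRibbon n nu rho j1) :
    u n j1 * u n j2 * u n j3 = 0 := by
  apply Finsupp.lhom_ext
  intro lam b
  rw [LinearMap.zero_apply]
  have hb : Finsupp.single lam b = b • Finsupp.single lam (1 : K) := by
    rw [Finsupp.smul_single, smul_eq_mul, mul_one]
  rw [hb, map_smul]
  suffices h : (u n j1 * u n j2 * u n j3) (Finsupp.single lam 1) = 0 by rw [h, smul_zero]
  rw [Module.End.mul_apply, Module.End.mul_apply, u_single]
  unfold uVec
  split_ifs with h3
  · set mu := Classical.choose h3 with hmu
    have hmu3 : IsRibbon n lam mu j3 := Classical.choose_spec h3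
    rw [map_smul, map_smul, u_single]
    unfold uVec
    split_ifs with h2
    · set nu := Classical.choose h2 with hnu
      have hnu2 : IsRibbon n mu nu j2 := Classical.choose_spec h2
      rw [map_smul, u_single]
      unfold uVec
      rw [dif_neg]
      · simp
      · rintro ⟨rho, hr⟩
        exact H lam mu nu hmu3 hnu2 rho hr
    · simp
  · simp

end RibbonAux

/-- `u_{i+n} u_i u_{i+n} = 0` and `u_i u_{i+n} u_i = 0`. -/
theorem ribbon_braid_zero (n : ℕ) (hn : 1 ≤ n) (i : ℤ) :
    u n (i + n) * u n i * u n (i + n) = 0 ∧ u n i * u n (i + n) * u n i = 0 := by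
  constructor
  · exact RibbonAux.triple_zero n (i + n) i (i + n)
      (fun lam mu nu h1 h2 rho h3 => absurd (RibbonAux.T2 hn h1 h2 h3) not_false)
  · exact RibbonAux.triple_zero n i (i + n) i
      (fun lam mu nu h1 h2 rho h3 => absurd (RibbonAux.T1 hn h1 h2 h3) not_false)



end RibbonSchur
end

section
/- Suppose the monomials u = u_{i_k} ... u_{i_1} and v = u_{j_l} ... u_{j_1} in ribbon Schur operators satisfy u·μ = q^t v·μ ≠ 0 for some integer t and partition μ. Then u = q^t v as operators on the whole space F. -/
open scoped Classical

noncomputable section RibbonSchur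

namespace RS
open Finset

/-- beta number of row `r` (0-indexed): `rowLen r - r - 1`. -/
def beta (l : YoungDiagram) (r : ℕ) : ℤ := (l.rowLen r : ℤ) - r - 1

/-- `d` is an occupied beta position of `l`. -/
def Occ (l : YoungDiagram) (d : ℤ) : Prop := ∃ r, beta l r = d

lemma beta_strictAnti (l : YoungDiagram) : StrictAnti (beta l) := by
  apply strictAnti_nat_of_succ_lt
  intro r
  have := l.rowLen_anti r (r + 1) (by omega)
  unfold beta; push_cast; omega

lemma strictAnti_range_eq {f g : ℕ → ℤ} (hf : StrictAnti f) (hg : StrictAnti g)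
    (h : ∀ d, (∃ r, f r = d) ↔ (∃ r, g r = d)) : ∀ r, f r = g r := by
  intro r
  induction r using Nat.strong_induction_on with
  | _ r ih =>
    have h1 : f r ≤ g r := by
      obtain ⟨s, hs⟩ := (h (f r)).mp ⟨r, rfl⟩
      rcases lt_or_ge s r with hlt | hge
      · exfalso
        have h2 : f s = g s := ih s hlt
        have h3 : f r < f s := hf hlt
        omega
      · have : g s ≤ g r := hg.antitone hge
        omega
    have h2 : g r ≤ f r := by
      obtain ⟨s, hs⟩ := (h (g r)).mpr ⟨r, rfl⟩
      rcases lt_or_ge s r with hlt | hge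
      · exfalso
        have h2 : f s = g s := ih s hlt
        have h3 : g r < g s := hg hlt
        omega
      · have : f s ≤ f r := hf.antitone hge
        omega
    omega

lemma yd_ext {l m : YoungDiagram} (h : ∀ r, l.rowLen r = m.rowLen r) : l = m := by
  apply le_antisymm <;>
  · intro c hc
    obtain ⟨r, j⟩ := c
    rw [YoungDiagram.mem_iff_lt_rowLen] at hc ⊢
    have := h r; omega

lemma eq_of_occ_eq {l m : YoungDiagram} (h : ∀ d, Occ l d ↔ Occ m d) : l = m := by
  apply yd_ext
  intro r
  have := strictAnti_range_eq (beta_strictAnti l) (beta_strictAnti m) h r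
  unfold beta at this; omega

lemma mem_skew {l m : YoungDiagram} {r c : ℕ} :
    (r, c) ∈ skewCells l m ↔ l.rowLen r ≤ c ∧ c < m.rowLen r := by
  simp only [skewCells, Finset.mem_sdiff, YoungDiagram.mem_cells,
    YoungDiagram.mem_iff_lt_rowLen, not_lt]
  tauto

end RS
namespace RS
open Finset

/-- Applicability of `u_i` to `l`. -/
def App (n : ℕ) (i : ℤ) (l : YoungDiagram) : Prop := Occ l (i - n) ∧ ¬ Occ l i

/-- The spin that a ribbon with head on diagonal `i` added to `l` would have. -/
def spinCount (n : ℕ) (i : ℤ) (l : YoungDiagram) : ℕ :=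
  ((Finset.Ioo (i - n) i).filter (fun d => Occ l d)).card

/-- Row-description of an `n`-ribbon `m / l` with head on diagonal `i`,
occupying rows `r1` through `r0`. -/
structure Desc (n : ℕ) (l m : YoungDiagram) (i : ℤ) (r1 r0 : ℕ) : Prop where
  h01 : r1 ≤ r0
  hlt : ∀ r, r1 ≤ r → r ≤ r0 → l.rowLen r < m.rowLen r
  hlow : ∀ r, r < r1 → m.rowLen r = l.rowLen r
  hhigh : ∀ r, r0 < r → m.rowLen r = l.rowLen r
  hlink : ∀ r, r1 ≤ r → r < r0 → m.rowLen (r + 1) = l.rowLen r + 1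
  hhead : (m.rowLen r1 : ℤ) = i + r1 + 1
  htail : (l.rowLen r0 : ℤ) = i - n + r0 + 1

namespace Desc

variable {n : ℕ} {l m : YoungDiagram} {i : ℤ} {r1 r0 : ℕ}

lemma le (D : Desc n l m i r1 r0) : l ≤ m := by
  intro c hc
  obtain ⟨r, j⟩ := c
  rw [YoungDiagram.mem_iff_lt_rowLen] at hc ⊢
  rcases lt_or_ge r r1 with h | h
  · rw [D.hlow r h]; exact hc
  rcases le_or_gt r r0 with h2 | h2
  · exact hc.trans (D.hlt r h h2)
  · rw [D.hhigh r h2]; exact hc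

lemma bm_head (D : Desc n l m i r1 r0) : beta m r1 = i := by
  have := D.hhead; unfold beta; omega

lemma bl_tail (D : Desc n l m i r1 r0) : beta l r0 = i - n := by
  have := D.htail; unfold beta; omega

lemma bm_low (D : Desc n l m i r1 r0) {r : ℕ} (h : r < r1) : beta m r = beta l r := by
  have := D.hlow r h; unfold beta; omega

lemma bm_high (D : Desc n l m i r1 r0) {r : ℕ} (h : r0 < r) : beta m r = beta l r := by
  have := D.hhigh r h; unfold beta; omega

lemma bm_mid (D : Desc n l m i r1 r0) {r : ℕ} (h1 : r1 ≤ r) (h2 : r < r0) :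
    beta m (r + 1) = beta l r := by
  have := D.hlink r h1 h2; unfold beta; push_cast; omega

lemma n_pos (D : Desc n l m i r1 r0) : 0 < n := by
  have h1 := D.hlt r0 D.h01 le_rfl
  have h2 : beta m r0 ≤ beta m r1 := (beta_strictAnti m).antitone D.h01
  have h3 := D.bm_head
  have h4 := D.htail
  unfold beta at *; omega

lemma bl_gt_low (D : Desc n l m i r1 r0) {r : ℕ} (h : r < r1) : i < beta l r := by
  have h1 : beta m r1 < beta m r := beta_strictAnti m h
  rw [D.bm_head, D.bm_low h] at h1; exact h1

lemma bl_le_tail (D : Desc n l m i r1 r0) {r : ℕ} (h : r0 ≤ r) : beta l r ≤ i - n := by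
  have h1 : beta l r ≤ beta l r0 := (beta_strictAnti l).antitone h
  rw [D.bl_tail] at h1; exact h1

lemma bl_mid_mem (D : Desc n l m i r1 r0) {r : ℕ} (h1 : r1 ≤ r) (h2 : r < r0) :
    i - n < beta l r ∧ beta l r < i := by
  constructor
  · have h3 : beta l r0 < beta l r := beta_strictAnti l h2
    rw [D.bl_tail] at h3; exact h3
  · have h3 : beta m (r + 1) < beta m r1 := beta_strictAnti m (by omega)
    rw [D.bm_head, D.bm_mid h1 h2] at h3; exact h3

lemma bl_lt_head (D : Desc n l m i r1 r0) {r : ℕ} (h1 : r1 ≤ r) : beta l r < i := by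
  rcases lt_or_ge r r0 with h2 | h2
  · exact (D.bl_mid_mem h1 h2).2
  · have := D.bl_le_tail h2
    have := D.n_pos
    omega

lemma occ_tail (D : Desc n l m i r1 r0) : Occ l (i - n) := ⟨r0, D.bl_tail⟩

lemma not_occ_head (D : Desc n l m i r1 r0) : ¬ Occ l i := by
  rintro ⟨r, hr⟩
  rcases lt_or_ge r r1 with h | h
  · have := D.bl_gt_low h; omega
  · have := D.bl_lt_head h; omega

lemma app (D : Desc n l m i r1 r0) : App n i l := ⟨D.occ_tail, D.not_occ_head⟩

lemma occ_m_iff (D : Desc n l m i r1 r0) (d : ℤ) :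
    Occ m d ↔ ((Occ l d ∧ d ≠ i - n) ∨ d = i) := by
  have hnp := D.n_pos
  constructor
  · rintro ⟨r, hr⟩
    rcases lt_or_ge r r1 with h | h
    · rw [D.bm_low h] at hr
      have := D.bl_gt_low h
      exact Or.inl ⟨⟨r, hr⟩, by omega⟩
    rcases eq_or_lt_of_le h with h' | h'
    · right; rw [← h'] at hr; rw [← hr]; exact D.bm_head
    rcases le_or_gt r r0 with h2 | h2
    · have hr' : r - 1 + 1 = r := by omega
      have h3 : beta m r = beta l (r - 1) := by rw [← hr']; exact D.bm_mid (by omega) (by omega)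
      rw [h3] at hr
      have := D.bl_mid_mem (r := r - 1) (by omega) (by omega)
      exact Or.inl ⟨⟨r - 1, hr⟩, by omega⟩
    · rw [D.bm_high h2] at hr
      have h3 : beta l r < beta l r0 := beta_strictAnti l h2
      rw [D.bl_tail] at h3
      exact Or.inl ⟨⟨r, hr⟩, by omega⟩
  · rintro (⟨⟨r, hr⟩, hne⟩ | rfl)
    · rcases lt_or_ge r r1 with h | h
      · exact ⟨r, by rw [D.bm_low h]; exact hr⟩
      rcases lt_or_ge r r0 with h2 | h2
      · exact ⟨r + 1, by rw [D.bm_mid h h2]; exact hr⟩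
      rcases eq_or_lt_of_le h2 with h' | h'
      · exfalso; rw [← h'] at hr; rw [D.bl_tail] at hr; omega
      · exact ⟨r, by rw [D.bm_high h']; exact hr⟩
    · exact ⟨r1, D.bm_head⟩

lemma mem_skew_iff (D : Desc n l m i r1 r0) {r c : ℕ} :
    (r, c) ∈ skewCells l m ↔ (r1 ≤ r ∧ r ≤ r0 ∧ l.rowLen r ≤ c ∧ c < m.rowLen r) := by
  rw [mem_skew]
  constructor
  · rintro ⟨h1, h2⟩
    rcases lt_or_ge r r1 with h | h
    · rw [D.hlow r h] at h2; omega
    rcases le_or_gt r r0 with h' | h'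
    · exact ⟨h, h', h1, h2⟩
    · rw [D.hhigh r h'] at h2; omega
  · rintro ⟨_, _, h1, h2⟩; exact ⟨h1, h2⟩

lemma rows_image (D : Desc n l m i r1 r0) :
    (skewCells l m).image Prod.fst = Finset.Icc r1 r0 := by
  ext r
  simp only [Finset.mem_image, Finset.mem_Icc]
  constructor
  · rintro ⟨⟨r', c⟩, hc, rfl⟩
    have := D.mem_skew_iff.mp hc
    exact ⟨this.1, this.2.1⟩
  · rintro ⟨h1, h2⟩
    exact ⟨(r, l.rowLen r), D.mem_skew_iff.mpr ⟨h1, h2, le_rfl, D.hlt r h1 h2⟩, rfl⟩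

lemma spin_eq (D : Desc n l m i r1 r0) : spin l m = r0 - r1 := by
  rw [spin, D.rows_image, Nat.card_Icc]
  omega

lemma occ_Ioo_iff (D : Desc n l m i r1 r0) {d : ℤ} (hd : d ∈ Finset.Ioo (i - n) i) :
    Occ l d ↔ ∃ r ∈ Finset.Ico r1 r0, beta l r = d := by
  rw [Finset.mem_Ioo] at hd
  constructor
  · rintro ⟨r, hr⟩
    refine ⟨r, ?_, hr⟩
    rw [Finset.mem_Ico]
    constructor
    · by_contra h
      have := D.bl_gt_low (r := r) (by omega)
      omega
    · by_contra h
      have := D.bl_le_tail (r := r) (by omega)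
      omega
  · rintro ⟨r, _, hr⟩; exact ⟨r, hr⟩

lemma spinCount_eq (D : Desc n l m i r1 r0) : spinCount n i l = r0 - r1 := by
  have himg : (Finset.Ioo (i - (n:ℤ)) i).filter (fun d => Occ l d)
      = (Finset.Ico r1 r0).image (beta l) := by
    ext d
    simp only [Finset.mem_filter, Finset.mem_image]
    constructor
    · rintro ⟨hd, hocc⟩
      obtain ⟨r, hr, hb⟩ := (D.occ_Ioo_iff hd).mp hocc
      exact ⟨r, hr, hb⟩
    · rintro ⟨r, hr, rfl⟩
      rw [Finset.mem_Ico] at hr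
      have h1 := D.bl_mid_mem hr.1 hr.2
      exact ⟨Finset.mem_Ioo.mpr h1, ⟨r, rfl⟩⟩
  rw [spinCount, himg, Finset.card_image_of_injective _ (beta_strictAnti l).injective,
    Nat.card_Ico]

lemma sum_telescope (M L : ℕ → ℤ) (a : ℕ) (k : ℕ)
    (hl : ∀ r, a ≤ r → r < a + k → M (r + 1) = L r + 1) :
    ∑ r ∈ Finset.Icc a (a + k), (M r - L r) = M a - L (a + k) + k := by
  induction k with
  | zero => simp
  | succ k ih =>
    have hins : Finset.Icc a (a + (k + 1)) = insert (a + k + 1) (Finset.Icc a (a + k)) := by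
      ext x
      simp only [Finset.mem_Icc, Finset.mem_insert]
      omega
    rw [hins, Finset.sum_insert (by simp only [Finset.mem_Icc]; omega),
      ih (fun r h1 h2 => hl r h1 (by omega))]
    have := hl (a + k) (by omega) (by omega)
    have heq : a + (k + 1) = a + k + 1 := by omega
    rw [heq, this]
    push_cast
    ring

lemma card_skew (D : Desc n l m i r1 r0) : (skewCells l m).card = n := by
  have hrepr : skewCells l m = (Finset.Icc r1 r0).biUnion
      (fun r => (Finset.Ico (l.rowLen r) (m.rowLen r)).image (fun c => (r, c))) := by
    ext ⟨r, c⟩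
    simp only [Finset.mem_biUnion, Finset.mem_image, Finset.mem_Icc, Finset.mem_Ico,
      D.mem_skew_iff]
    constructor
    · rintro ⟨h1, h2, h3, h4⟩
      exact ⟨r, ⟨h1, h2⟩, c, ⟨h3, h4⟩, rfl⟩
    · rintro ⟨r', ⟨h1, h2⟩, c', ⟨h3, h4⟩, heq⟩
      cases heq
      exact ⟨h1, h2, h3, h4⟩
  have hdisj : ∀ x ∈ Finset.Icc r1 r0, ∀ y ∈ Finset.Icc r1 r0, x ≠ y →
      Disjoint ((Finset.Ico (l.rowLen x) (m.rowLen x)).image (fun c => ((x, c) : ℕ × ℕ)))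
        ((Finset.Ico (l.rowLen y) (m.rowLen y)).image (fun c => ((y, c) : ℕ × ℕ))) := by
    intro x _ y _ hxy
    rw [Finset.disjoint_left]
    intro a ha hb
    simp only [Finset.mem_image] at ha hb
    obtain ⟨c, _, rfl⟩ := ha
    obtain ⟨c', _, heq⟩ := hb
    injection heq with e1 e2
    exact hxy e1.symm
  rw [hrepr, Finset.card_biUnion hdisj]
  have hcard : ∀ r ∈ Finset.Icc r1 r0,
      ((Finset.Ico (l.rowLen r) (m.rowLen r)).image (fun c => ((r, c) : ℕ × ℕ))).card
        = m.rowLen r - l.rowLen r := by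
    intro r _
    rw [Finset.card_image_of_injective _ (fun a b hab => by injection hab), Nat.card_Ico]
  rw [Finset.sum_congr rfl hcard]
  have hz : ((∑ r ∈ Finset.Icc r1 r0, (m.rowLen r - l.rowLen r) : ℕ) : ℤ) = (n : ℤ) := by
    rw [Nat.cast_sum]
    have hc2 : ∀ r ∈ Finset.Icc r1 r0, ((m.rowLen r - l.rowLen r : ℕ) : ℤ)
        = (m.rowLen r : ℤ) - (l.rowLen r : ℤ) := by
      intro r hr; rw [Finset.mem_Icc] at hr
      have := D.hlt r hr.1 hr.2; omega
    rw [Finset.sum_congr rfl hc2]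
    have hl' : ∀ r, r1 ≤ r → r < r1 + (r0 - r1) →
        (fun r => (m.rowLen r : ℤ)) (r + 1) = (fun r => (l.rowLen r : ℤ)) r + 1 := by
      intro r h1 h2
      have := D.hlink r h1 (by omega)
      simp only []
      omega
    have hts := sum_telescope (fun r => (m.rowLen r : ℤ)) (fun r => (l.rowLen r : ℤ))
      r1 (r0 - r1) hl'
    have h01 := D.h01
    have hk : r1 + (r0 - r1) = r0 := by omega
    rw [hk] at hts
    rw [hts]
    have h1 := D.hhead; have h2 := D.htail
    have h3 := D.h01
    omega
  exact_mod_cast hz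

/-- the step relation for connectivity -/
abbrev Step (l m : YoungDiagram) (x y : ℕ × ℕ) : Prop :=
  x ∈ skewCells l m ∧ y ∈ skewCells l m ∧ CellAdj x y

lemma step_symm : Symmetric (Step l m) := by
  rintro x y ⟨h1, h2, h3⟩
  refine ⟨h2, h1, ?_⟩
  unfold CellAdj at *
  tauto

lemma walk_row (D : Desc n l m i r1 r0) (r c : ℕ) : ∀ k, (r, c) ∈ skewCells l m →
    (r, c + k) ∈ skewCells l m →
    Relation.ReflTransGen (Step l m) (r, c) (r, c + k) := by
  intro k
  induction k with
  | zero => intro h _; exact .refl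
  | succ k ih =>
    intro h1 h2
    have hmid : (r, c + k) ∈ skewCells l m := by
      rw [D.mem_skew_iff] at h1 h2 ⊢
      omega
    exact (ih h1 hmid).tail ⟨hmid, h2, Or.inl ⟨rfl, Or.inr rfl⟩⟩

lemma walk_to_head (D : Desc n l m i r1 r0) : ∀ k r c, r = r1 + k → (r, c) ∈ skewCells l m →
    Relation.ReflTransGen (Step l m) (r, c) (r1, m.rowLen r1 - 1) := by
  intro k
  induction k with
  | zero =>
    intro r c hr hc
    have hreq : r = r1 := by omega
    rw [hreq] at hc ⊢
    have hcm := D.mem_skew_iff.mp hc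
    have hlt1 := D.hlt r1 le_rfl D.h01
    have hrw : m.rowLen r1 - 1 = c + (m.rowLen r1 - 1 - c) := by omega
    rw [hrw]
    exact D.walk_row r1 c _ hc (D.mem_skew_iff.mpr ⟨le_rfl, D.h01, by omega, by omega⟩)
  | succ k ih =>
    intro r c hr hc
    have hcm := D.mem_skew_iff.mp hc
    have hr1r : r1 ≤ r - 1 := by omega
    have hrr0 : r - 1 < r0 := by omega
    have hlink := D.hlink (r - 1) hr1r hrr0
    have hrr : r - 1 + 1 = r := by omega
    rw [hrr] at hlink
    have hlt := D.hlt r (by omega) (by omega)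
    have hltup := D.hlt (r - 1) (by omega) (by omega)
    have hR : (r, m.rowLen r - 1) ∈ skewCells l m :=
      D.mem_skew_iff.mpr ⟨by omega, by omega, by omega, by omega⟩
    have hU : (r - 1, m.rowLen r - 1) ∈ skewCells l m :=
      D.mem_skew_iff.mpr ⟨by omega, by omega, by omega, by omega⟩
    have w1 : Relation.ReflTransGen (Step l m) (r, c) (r, m.rowLen r - 1) := by
      have hrw : m.rowLen r - 1 = c + (m.rowLen r - 1 - c) := by omega
      rw [hrw]
      exact D.walk_row r c _ hc (hrw ▸ hR)
    have wstep : Step l m (r, m.rowLen r - 1) (r - 1, m.rowLen r - 1) :=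
      ⟨hR, hU, Or.inr ⟨rfl, Or.inl (by omega)⟩⟩
    exact (w1.tail wstep).trans (ih (r - 1) (m.rowLen r - 1) (by omega) hU)

lemma conn (D : Desc n l m i r1 r0) : ∀ a ∈ skewCells l m, ∀ b ∈ skewCells l m,
    Relation.ReflTransGen (Step l m) a b := by
  rintro ⟨ra, ca⟩ ha ⟨rb, cb⟩ hb
  have h1 := D.walk_to_head (ra - r1) ra ca (by have := (D.mem_skew_iff.mp ha).1; omega) ha
  have h2 := D.walk_to_head (rb - r1) rb cb (by have := (D.mem_skew_iff.mp hb).1; omega) hb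
  exact h1.trans (by haveI : Std.Symm (Step l m) := ⟨fun a b h => step_symm h⟩; exact Std.Symm.symm _ _ h2)

lemma isRibbon (D : Desc n l m i r1 r0) : IsRibbon n l m i := by
  refine ⟨D.le, D.card_skew, fun a ha b hb => D.conn a ha b hb, ?_, ?_⟩
  · rintro ⟨r, c, h1, h2, h3, h4⟩
    rw [D.mem_skew_iff] at h1 h2 h3 h4
    have := D.hlink r (by omega) (by omega)
    omega
  · have hlt1 := D.hlt r1 le_rfl D.h01
    refine ⟨(r1, m.rowLen r1 - 1),
      D.mem_skew_iff.mpr ⟨le_rfl, D.h01, by omega, by omega⟩, ?_, ?_⟩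
    · dsimp only
      have := D.hhead; omega
    · rintro ⟨r, c⟩ hp
      rw [D.mem_skew_iff] at hp
      have hb : beta m r ≤ beta m r1 := (beta_strictAnti m).antitone hp.1
      have hh := D.bm_head
      unfold beta at hb hh
      dsimp only
      omega

end Desc

end RS
namespace RS
open Finset

/-- content (diagonal) of a cell -/
def cont (p : ℕ × ℕ) : ℤ := (p.2 : ℤ) - (p.1 : ℤ)

lemma mem_skew' {l m : YoungDiagram} {p : ℕ × ℕ} :
    p ∈ skewCells l m ↔ p ∈ m.cells ∧ p ∉ l.cells := Finset.mem_sdiff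

lemma rowLen_le_of_le {l m : YoungDiagram} (h : l ≤ m) (r : ℕ) :
    l.rowLen r ≤ m.rowLen r := by
  by_contra hc
  push_neg at hc
  have h1 : (r, m.rowLen r) ∈ l := YoungDiagram.mem_iff_lt_rowLen.mpr hc
  have h2 : (r, m.rowLen r) ∈ m.cells := YoungDiagram.cells_subset_iff.mpr h h1
  rw [YoungDiagram.mem_cells, YoungDiagram.mem_iff_lt_rowLen] at h2
  omega

lemma skew_cont_inj {l m : YoungDiagram}
    (h2x2 : ¬ ∃ r c : ℕ, (r, c) ∈ skewCells l m ∧ (r + 1, c) ∈ skewCells l m ∧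
      (r, c + 1) ∈ skewCells l m ∧ (r + 1, c + 1) ∈ skewCells l m) :
    ∀ a ∈ skewCells l m, ∀ b ∈ skewCells l m, cont a = cont b → a = b := by
  suffices H : ∀ a ∈ skewCells l m, ∀ b ∈ skewCells l m,
      cont a = cont b → a.1 ≤ b.1 → a = b by
    intro a ha b hb hc
    rcases le_total a.1 b.1 with h | h
    · exact H a ha b hb hc h
    · exact (H b hb a ha hc.symm h).symm
  rintro ⟨ra, ca⟩ ha ⟨rb, cb⟩ hb hc hle
  unfold cont at hc
  dsimp only at hc hle
  by_cases heq : ra = rb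
  · subst heq
    have : ca = cb := by omega
    subst this
    rfl
  exfalso
  have hlt : ra + 1 ≤ rb := by omega
  have hclt : ca + 1 ≤ cb := by omega
  rw [mem_skew'] at ha hb
  apply h2x2
  have hm11 : (ra + 1, ca + 1) ∈ m.cells := by
    rw [YoungDiagram.mem_cells]
    exact m.up_left_mem hlt hclt ((YoungDiagram.mem_cells _).mp hb.1)
  have hm10 : (ra + 1, ca) ∈ m.cells := by
    rw [YoungDiagram.mem_cells]
    exact m.up_left_mem le_rfl (by omega) ((YoungDiagram.mem_cells _).mp hm11)
  have hm01 : (ra, ca + 1) ∈ m.cells := by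
    rw [YoungDiagram.mem_cells]
    exact m.up_left_mem (by omega) le_rfl ((YoungDiagram.mem_cells _).mp hm11)
  have hnl : ∀ r c : ℕ, ra ≤ r → ca ≤ c → (r, c) ∉ l.cells := by
    intro r c h1 h2 hmem
    exact ha.2 ((YoungDiagram.mem_cells _).mpr
      (l.up_left_mem h1 h2 ((YoungDiagram.mem_cells _).mp hmem)))
  exact ⟨ra, ca, mem_skew'.mpr ha,
    mem_skew'.mpr ⟨hm10, hnl _ _ (by omega) le_rfl⟩,
    mem_skew'.mpr ⟨hm01, hnl _ _ le_rfl (by omega)⟩,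
    mem_skew'.mpr ⟨hm11, hnl _ _ (by omega) (by omega)⟩⟩

lemma cellAdj_cont {a b : ℕ × ℕ} (h : CellAdj a b) :
    cont b = cont a + 1 ∨ cont b = cont a - 1 := by
  unfold CellAdj at h
  unfold cont
  rcases h with ⟨h1, h2 | h2⟩ | ⟨h1, h2 | h2⟩ <;> omega

lemma walk_ivt {l m : YoungDiagram} {a b : ℕ × ℕ}
    (hab : Relation.ReflTransGen (Desc.Step l m) a b) (ha : a ∈ skewCells l m) :
    ∀ e : ℤ, cont a ≤ e → e ≤ cont b → ∃ x ∈ skewCells l m, cont x = e := by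
  induction hab with
  | refl => exact fun e h1 h2 => ⟨a, ha, by omega⟩
  | @tail b c hab hbc ih =>
    intro e h1 h2
    rcases le_or_gt e (cont b) with h | h
    · exact ih e h1 h
    · have := cellAdj_cont hbc.2.2
      exact ⟨c, hbc.2.1, by omega⟩

lemma walk_cross {l m : YoungDiagram} {a b : ℕ × ℕ}
    (hab : Relation.ReflTransGen (Desc.Step l m) a b) :
    ∀ d : ℤ, cont a ≤ d → d + 1 ≤ cont b →
    ∃ x y, Desc.Step l m x y ∧ cont x = d ∧ cont y = d + 1 := by
  induction hab with
  | refl => intro d h1 h2; omega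
  | @tail b c hab hbc ih =>
    intro d h1 h2
    rcases le_or_gt (d + 1) (cont b) with h | h
    · exact ih d h1 h
    · have := cellAdj_cont hbc.2.2
      exact ⟨b, c, hbc, by omega, by omega⟩

lemma nat_ivt_down (f : ℕ → ℕ) :
    ∀ K : ℕ, (∀ k, k < K → f (k + 1) ≤ f k ∧ f k ≤ f (k + 1) + 1) →
    ∀ r, f K ≤ r → r ≤ f 0 → ∃ k, k ≤ K ∧ f k = r := by
  intro K
  induction K with
  | zero => intro _ r h1 h2; exact ⟨0, le_rfl, by omega⟩
  | succ K ih =>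
    intro hstep r h1 h2
    rcases le_or_gt (f K) r with h | h
    · obtain ⟨k, hk, hfk⟩ := ih (fun k hk => hstep k (by omega)) r h h2
      exact ⟨k, by omega, hfk⟩
    · have hs := hstep K (by omega)
      exact ⟨K + 1, le_rfl, by omega⟩

lemma nat_anti (f : ℕ → ℕ) (K : ℕ) (hstep : ∀ k, k < K → f (k + 1) ≤ f k) :
    ∀ k k', k ≤ k' → k' ≤ K → f k' ≤ f k := by
  intro k k'
  induction k' with
  | zero =>
    intro hk hK
    have hk0 : k = 0 := by omega
    rw [hk0]
  | succ k' ih =>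
    intro hk hK
    rcases Nat.eq_or_lt_of_le hk with h | h
    · rw [h]
    · exact le_trans (hstep k' (by omega)) (ih (by omega) (by omega))

end RS
namespace RS
open Finset

lemma isRibbon_desc {n : ℕ} {l m : YoungDiagram} {i : ℤ} (hR : IsRibbon n l m i) :
    ∃ r1 r0, Desc n l m i r1 r0 := by
  obtain ⟨hle, hcard, hconn, h2x2, p, hp, hpc, hpmax⟩ := hR
  have hinj := skew_cont_inj h2x2
  have hcp : cont p = i := hpc
  have hpmax' : ∀ x ∈ skewCells l m, cont x ≤ i := by
    intro x hx
    have := hpmax x hx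
    unfold cont
    omega
  have hn1 : 1 ≤ n := by
    rw [← hcard]
    exact Finset.card_pos.mpr ⟨p, hp⟩
  have hcimg : ((skewCells l m).image cont).card = n := by
    rw [Finset.card_image_of_injOn (fun a ha b hb => hinj a ha b hb), hcard]
  have hDI : (skewCells l m).image cont = Finset.Icc (i - n + 1) i := by
    have hsub : (skewCells l m).image cont ⊆ Finset.Icc (i - n + 1) i := by
      intro d hd
      obtain ⟨x, hx, rfl⟩ := Finset.mem_image.mp hd
      rw [Finset.mem_Icc]
      refine ⟨?_, hpmax' x hx⟩
      by_contra hlow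
      push_neg at hlow
      have hss : Finset.Icc (cont x) i ⊆ (skewCells l m).image cont := by
        intro e he
        rw [Finset.mem_Icc] at he
        obtain ⟨y, hy, hye⟩ := walk_ivt (hconn x hx p hp) hx e he.1 (by omega)
        exact Finset.mem_image.mpr ⟨y, hy, hye⟩
      have hc1 : (Finset.Icc (cont x) i).card ≤ ((skewCells l m).image cont).card :=
        Finset.card_le_card hss
      rw [Int.card_Icc, hcimg] at hc1
      omega
    apply Finset.eq_of_subset_of_card_le hsub
    rw [hcimg, Int.card_Icc]
    omega
  have hex : ∀ d : ℤ, ∃ x : ℕ × ℕ, i - n + 1 ≤ d → d ≤ i → x ∈ skewCells l m ∧ cont x = d := by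
    intro d
    by_cases hd : i - n + 1 ≤ d ∧ d ≤ i
    · have hdm : d ∈ (skewCells l m).image cont := by
        rw [hDI, Finset.mem_Icc]; exact hd
      obtain ⟨x, hx, hcx⟩ := Finset.mem_image.mp hdm
      exact ⟨x, fun _ _ => ⟨hx, hcx⟩⟩
    · exact ⟨(0, 0), fun h1 h2 => absurd ⟨h1, h2⟩ hd⟩
  choose cell hcell using hex
  have hcmem : ∀ d : ℤ, i - n + 1 ≤ d → d ≤ i → cell d ∈ skewCells l m :=
    fun d h1 h2 => (hcell d h1 h2).1
  have hccont : ∀ d : ℤ, i - n + 1 ≤ d → d ≤ i → cont (cell d) = d :=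
    fun d h1 h2 => (hcell d h1 h2).2
  have huniq : ∀ x ∈ skewCells l m, x = cell (cont x) := by
    intro x hx
    have hb : cont x ∈ Finset.Icc (i - n + 1) i := by
      rw [← hDI]; exact Finset.mem_image_of_mem cont hx
    rw [Finset.mem_Icc] at hb
    exact hinj x hx _ (hcmem _ hb.1 hb.2) ((hccont _ hb.1 hb.2).symm)
  have hstep : ∀ d : ℤ, i - n + 1 ≤ d → d < i →
      ((cell (d+1)).1 = (cell d).1 ∧ (cell (d+1)).2 = (cell d).2 + 1) ∨
      ((cell (d+1)).1 + 1 = (cell d).1 ∧ (cell (d+1)).2 = (cell d).2) := by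
    intro d h1 h2
    obtain ⟨x, y, hxy, hcx, hcy⟩ := walk_cross
      (hconn (cell d) (hcmem d h1 (by omega)) p hp) d
      (le_of_eq (hccont d h1 (by omega)))
      (by omega)
    have hxc : x = cell d :=
      hinj x hxy.1 _ (hcmem d h1 (by omega))
        (by rw [hcx, hccont d h1 (by omega)])
    have hyc : y = cell (d+1) :=
      hinj y hxy.2.1 _ (hcmem (d+1) (by omega) (by omega))
        (by rw [hcy, hccont (d+1) (by omega) (by omega)])
    have hadj := hxy.2.2
    rw [hxc, hyc] at hadj
    have hcd := hccont d h1 (by omega)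
    have hcd1 := hccont (d+1) (by omega) (by omega)
    unfold CellAdj at hadj
    unfold cont at hcd hcd1
    rcases hadj with ⟨e1, e2 | e2⟩ | ⟨e1, e2 | e2⟩ <;> omega
  set K := n - 1 with hKdef
  set f : ℕ → ℕ := fun k => (cell (i - n + 1 + k)).1 with hf
  have hfstep : ∀ k, k < K → f (k + 1) ≤ f k ∧ f k ≤ f (k + 1) + 1 := by
    intro k hk
    have hb1 : i - n + 1 ≤ i - n + 1 + k := by omega
    have hb2 : i - n + 1 + k < i := by omega
    have hs := hstep (i - n + 1 + k) hb1 hb2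
    have harg : i - (n : ℤ) + 1 + ((k + 1 : ℕ) : ℤ) = i - n + 1 + k + 1 := by push_cast; ring
    simp only [hf]
    rw [harg]
    rcases hs with ⟨h1, _⟩ | ⟨h1, _⟩ <;> omega
  have hanti : ∀ k k', k ≤ k' → k' ≤ K → f k' ≤ f k :=
    nat_anti f K (fun k hk => (hfstep k hk).1)
  have hiK : i - (n : ℤ) + 1 + (K : ℤ) = i := by omega
  have r1def : f K = (cell i).1 := by
    simp only [hf]
    rw [hiK]
  have r0def : f 0 = (cell (i - n + 1)).1 := by
    simp only [hf, Nat.cast_zero, add_zero]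
  have h01 : f K ≤ f 0 := hanti 0 K (Nat.zero_le K) le_rfl
  have hrow : ∀ d : ℤ, i - n + 1 ≤ d → d ≤ i → f K ≤ (cell d).1 ∧ (cell d).1 ≤ f 0 := by
    intro d h1 h2
    have hk1 : (((d - (i - n + 1)).toNat : ℤ)) = d - (i - n + 1) := Int.toNat_of_nonneg (by omega)
    have hkK : (d - (i - n + 1)).toNat ≤ K := by omega
    have hcell_eq : (cell d).1 = f ((d - (i - n + 1)).toNat) := by
      simp only [hf]
      congr 2
      omega
    rw [hcell_eq]
    exact ⟨hanti _ K hkK le_rfl, hanti 0 _ (Nat.zero_le _) hkK⟩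
  have haux : ∀ x ∈ skewCells l m, f K ≤ x.1 ∧ x.1 ≤ f 0 := by
    intro x hx
    have hb : cont x ∈ Finset.Icc (i - n + 1) i := by
      rw [← hDI]; exact Finset.mem_image_of_mem cont hx
    rw [Finset.mem_Icc] at hb
    have h := hrow (cont x) hb.1 hb.2
    rw [← huniq x hx] at h
    exact h
  have hivt : ∀ r : ℕ, f K ≤ r → r ≤ f 0 → ∃ d : ℤ, i - n + 1 ≤ d ∧ d ≤ i ∧ (cell d).1 = r := by
    intro r h1 h2
    obtain ⟨k, hk, hfk⟩ := nat_ivt_down f K hfstep r h1 h2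
    refine ⟨i - n + 1 + k, by omega, by omega, ?_⟩
    rw [← hfk]
  have hmemb : ∀ d : ℤ, i - n + 1 ≤ d → d ≤ i →
      l.rowLen (cell d).1 ≤ (cell d).2 ∧ (cell d).2 < m.rowLen (cell d).1 := by
    intro d h1 h2
    have := hcmem d h1 h2
    rw [← Prod.mk.eta (p := cell d), mem_skew] at this
    exact this
  -- the Desc fields
  have hlow : ∀ r, r < f K → m.rowLen r = l.rowLen r := by
    intro r hr
    have hmle := rowLen_le_of_le hle r
    by_contra hne
    have hlt2 : l.rowLen r < m.rowLen r := by omega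
    have hcc : (r, l.rowLen r) ∈ skewCells l m := mem_skew.mpr ⟨le_rfl, hlt2⟩
    have := (haux _ hcc).1
    dsimp only at this
    omega
  have hhigh : ∀ r, f 0 < r → m.rowLen r = l.rowLen r := by
    intro r hr
    have hmle := rowLen_le_of_le hle r
    by_contra hne
    have hlt2 : l.rowLen r < m.rowLen r := by omega
    have hcc : (r, l.rowLen r) ∈ skewCells l m := mem_skew.mpr ⟨le_rfl, hlt2⟩
    have := (haux _ hcc).2
    dsimp only at this
    omega
  have hltf : ∀ r, f K ≤ r → r ≤ f 0 → l.rowLen r < m.rowLen r := by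
    intro r h1 h2
    obtain ⟨d, hd1, hd2, hd3⟩ := hivt r h1 h2
    have := hmemb d hd1 hd2
    rw [hd3] at this
    omega
  have hlink : ∀ r, f K ≤ r → r < f 0 → m.rowLen (r + 1) = l.rowLen r + 1 := by
    intro r hr1 hr0
    obtain ⟨dex, hdex1, hdex2, hdex3⟩ := hivt (r + 1) (by omega) (by omega)
    obtain ⟨dm, hdmmem, hdmax⟩ : ∃ dm ∈ Finset.filter (fun d => (cell d).1 = r + 1)
        (Finset.Icc (i - (n:ℤ) + 1) i), ∀ x ∈ Finset.filter (fun d => (cell d).1 = r + 1)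
        (Finset.Icc (i - (n:ℤ) + 1) i), x ≤ dm := by
      have hne : (Finset.filter (fun d => (cell d).1 = r + 1)
          (Finset.Icc (i - (n:ℤ) + 1) i)).Nonempty :=
        ⟨dex, by rw [Finset.mem_filter, Finset.mem_Icc]; exact ⟨⟨hdex1, hdex2⟩, hdex3⟩⟩
      exact ⟨_, Finset.max'_mem _ hne, fun x hx => Finset.le_max' _ x hx⟩
    rw [Finset.mem_filter, Finset.mem_Icc] at hdmmem
    obtain ⟨⟨hdm1, hdm2⟩, hdm3⟩ := hdmmem
    have hdmax' : ∀ x : ℤ, i - n + 1 ≤ x → x ≤ i → (cell x).1 = r + 1 → x ≤ dm := by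
      intro x h1 h2 h3
      exact hdmax x (by rw [Finset.mem_filter, Finset.mem_Icc]; exact ⟨⟨h1, h2⟩, h3⟩)
    have hdmi : dm < i := by
      rcases eq_or_lt_of_le hdm2 with h | h
      · exfalso
        have hre : (cell i).1 = r + 1 := by rw [← h]; exact hdm3
        rw [← r1def] at hre
        omega
      · exact h
    have hs := hstep dm hdm1 hdmi
    have hnotA : (cell (dm + 1)).1 ≠ r + 1 := by
      intro hcon
      have := hdmax' (dm + 1) (by omega) (by omega) hcon
      omega
    have hup : (cell (dm + 1)).1 + 1 = (cell dm).1 ∧ (cell (dm + 1)).2 = (cell dm).2 := by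
      rcases hs with ⟨h1, h2⟩ | h
      · exfalso; rw [hdm3] at h1; exact hnotA (by omega)
      · exact h
    have hrow_dm : (cell dm).1 = r + 1 := hdm3
    have hrow_dm1 : (cell (dm + 1)).1 = r := by omega
    have hb1 := hmemb dm hdm1 (le_of_lt hdmi)
    have hb2 := hmemb (dm + 1) (by omega) (by omega)
    rw [hrow_dm] at hb1
    rw [hrow_dm1, hup.2] at hb2
    have hcd : cont (cell dm) = dm := hccont dm hdm1 (le_of_lt hdmi)
    unfold cont at hcd
    rw [hrow_dm] at hcd
    have hcm : m.rowLen (r + 1) = (cell dm).2 + 1 := by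
      rcases Nat.lt_or_ge ((cell dm).2 + 1) (m.rowLen (r + 1)) with hlt2 | hge
      · exfalso
        have hmm : (r + 1, (cell dm).2 + 1) ∈ m.cells := by
          rw [YoungDiagram.mem_cells, YoungDiagram.mem_iff_lt_rowLen]; exact hlt2
        have hml : (r + 1, (cell dm).2 + 1) ∉ l.cells := by
          intro hcon
          have hll : (r + 1, (cell dm).2) ∈ l :=
            l.up_left_mem le_rfl (by omega) ((YoungDiagram.mem_cells _).mp hcon)
          rw [YoungDiagram.mem_iff_lt_rowLen] at hll
          omega
        have hcc : (r + 1, (cell dm).2 + 1) ∈ skewCells l m := mem_skew'.mpr ⟨hmm, hml⟩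
        have hcc2 : cont (r + 1, (cell dm).2 + 1) = dm + 1 := by
          unfold cont; dsimp only; omega
        have heqc : (r + 1, (cell dm).2 + 1) = cell (dm + 1) := by
          rw [huniq _ hcc, hcc2]
        have := congrArg Prod.fst heqc
        dsimp only at this
        omega
      · omega
    have hcl : l.rowLen r = (cell dm).2 := by
      rcases Nat.lt_or_ge (l.rowLen r) ((cell dm).2) with hlt2 | hge
      · exfalso
        have hc1 : 1 ≤ (cell dm).2 := by omega
        have hmm : (r, (cell dm).2 - 1) ∈ m.cells := by
          rw [YoungDiagram.mem_cells]
          exact m.up_left_mem le_rfl (by omega)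
            (YoungDiagram.mem_iff_lt_rowLen.mpr hb2.2)
        have hml : (r, (cell dm).2 - 1) ∉ l.cells := by
          rw [YoungDiagram.mem_cells, YoungDiagram.mem_iff_lt_rowLen]
          omega
        have hcc : (r, (cell dm).2 - 1) ∈ skewCells l m := mem_skew'.mpr ⟨hmm, hml⟩
        have hcc2 : cont (r, (cell dm).2 - 1) = dm := by
          unfold cont; dsimp only; omega
        have heqc : (r, (cell dm).2 - 1) = cell dm := by
          rw [huniq _ hcc, hcc2]
        have := congrArg Prod.fst heqc
        dsimp only at this
        omega
      · omega
    omega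
  have hhead : (m.rowLen (f K) : ℤ) = i + (f K) + 1 := by
    have hb := hmemb i (by omega) le_rfl
    have hcnt : cont (cell i) = i := hccont i (by omega) le_rfl
    unfold cont at hcnt
    have hmr : m.rowLen ((cell i).1) = (cell i).2 + 1 := by
      rcases Nat.lt_or_ge ((cell i).2 + 1) (m.rowLen (cell i).1) with hlt2 | hge
      · exfalso
        have hmm : ((cell i).1, (cell i).2 + 1) ∈ m.cells := by
          rw [YoungDiagram.mem_cells, YoungDiagram.mem_iff_lt_rowLen]; exact hlt2
        have hml : ((cell i).1, (cell i).2 + 1) ∉ l.cells := by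
          intro hcon
          have hll : ((cell i).1, (cell i).2) ∈ l :=
            l.up_left_mem le_rfl (by omega) ((YoungDiagram.mem_cells _).mp hcon)
          rw [YoungDiagram.mem_iff_lt_rowLen] at hll
          omega
        have hcc : ((cell i).1, (cell i).2 + 1) ∈ skewCells l m := mem_skew'.mpr ⟨hmm, hml⟩
        have := hpmax' _ hcc
        unfold cont at this
        dsimp only at this
        omega
      · omega
    rw [r1def]
    omega
  have htail : (l.rowLen (f 0) : ℤ) = i - n + (f 0) + 1 := by
    have hb := hmemb (i - n + 1) le_rfl (by omega)
    have hcnt : cont (cell (i - n + 1)) = i - n + 1 := hccont (i - n + 1) le_rfl (by omega)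
    unfold cont at hcnt
    have hlr : l.rowLen ((cell (i - n + 1)).1) = (cell (i - n + 1)).2 := by
      rcases Nat.lt_or_ge (l.rowLen ((cell (i - n + 1)).1)) ((cell (i - n + 1)).2) with hlt2 | hge
      · exfalso
        have hc1 : 1 ≤ (cell (i - n + 1)).2 := by omega
        have hmm : ((cell (i - n + 1)).1, (cell (i - n + 1)).2 - 1) ∈ m.cells := by
          rw [YoungDiagram.mem_cells]
          exact m.up_left_mem le_rfl (by omega)
            (YoungDiagram.mem_iff_lt_rowLen.mpr hb.2)
        have hml : ((cell (i - n + 1)).1, (cell (i - n + 1)).2 - 1) ∉ l.cells := by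
          rw [YoungDiagram.mem_cells, YoungDiagram.mem_iff_lt_rowLen]
          omega
        have hcc : ((cell (i - n + 1)).1, (cell (i - n + 1)).2 - 1) ∈ skewCells l m :=
          mem_skew'.mpr ⟨hmm, hml⟩
        have hin : cont ((cell (i - n + 1)).1, (cell (i - n + 1)).2 - 1)
            ∈ Finset.Icc (i - n + 1) i := by
          rw [← hDI]
          exact Finset.mem_image_of_mem cont hcc
        rw [Finset.mem_Icc] at hin
        unfold cont at hin
        dsimp only at hin
        omega
      · omega
    rw [r0def]
    omega
  exact ⟨f K, f 0, ⟨h01, hltf, hlow, hhigh, hlink, hhead, htail⟩⟩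

end RS
namespace RS
open Finset

/-- Young diagram from an antitone, eventually-zero row-length function. -/
def ofFn (g : ℕ → ℕ) (hg : Antitone g) (R : ℕ) (hR : ∀ r, R ≤ r → g r = 0) :
    YoungDiagram where
  cells := ((Finset.range R) ×ˢ (Finset.range (g 0))).filter (fun p => p.2 < g p.1)
  isLowerSet := by
    rintro ⟨r, c⟩ ⟨r', c'⟩ hle hmem
    rw [Prod.mk_le_mk] at hle
    simp only [Finset.coe_filter, Set.mem_setOf_eq, Finset.mem_product,
      Finset.mem_range] at hmem ⊢
    obtain ⟨⟨hm1, hm2⟩, hm3⟩ := hmem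
    have hga : g r ≤ g r' := hg hle.1
    have hrR : r' < R := by
      by_contra hcon
      have := hR r' (by omega)
      omega
    exact ⟨⟨hrR, by omega⟩, by omega⟩

lemma ofFn_rowLen (g : ℕ → ℕ) (hg : Antitone g) (R : ℕ) (hR : ∀ r, R ≤ r → g r = 0)
    (r : ℕ) : (ofFn g hg R hR).rowLen r = g r := by
  have hmem : ∀ c, (r, c) ∈ ofFn g hg R hR ↔ c < g r := by
    intro c
    rw [← YoungDiagram.mem_cells]
    show (r, c) ∈ Finset.filter _ _ ↔ _
    simp only [Finset.mem_filter, Finset.mem_product, Finset.mem_range]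
    constructor
    · rintro ⟨_, h⟩; exact h
    · intro h
      have h1 : r < R := by
        by_contra hcon
        have := hR r (by omega)
        omega
      have h2 : g r ≤ g 0 := hg (Nat.zero_le r)
      exact ⟨⟨h1, by omega⟩, h⟩
  have h1 : (ofFn g hg R hR).rowLen r ≤ g r := by
    by_contra hcon
    push_neg at hcon
    have := (hmem (g r)).mp (YoungDiagram.mem_iff_lt_rowLen.mpr hcon)
    omega
  have h2 : g r ≤ (ofFn g hg R hR).rowLen r := by
    rcases Nat.eq_zero_or_pos (g r) with h | h
    · omega
    · have := YoungDiagram.mem_iff_lt_rowLen.mp ((hmem (g r - 1)).mpr (by omega))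
      omega
  omega

lemma rowLen_zero_of_ge {l : YoungDiagram} {r : ℕ} (h : l.colLen 0 ≤ r) :
    l.rowLen r = 0 := by
  by_contra hcon
  have h1 : (r, 0) ∈ l := YoungDiagram.mem_iff_lt_rowLen.mpr (by omega)
  rw [YoungDiagram.mem_iff_lt_colLen] at h1
  omega

lemma exists_desc {n : ℕ} (hn : 1 ≤ n) {l : YoungDiagram} {i : ℤ} (hA : App n i l) :
    ∃ m r1 r0, Desc n l m i r1 r0 := by
  classical
  obtain ⟨⟨r0, hr0⟩, hni⟩ := hA
  have hex : ∃ r, beta l r < i := ⟨r0, by unfold beta at hr0 ⊢; omega⟩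
  set r1 := Nat.find hex with hr1def
  have hr1lt : beta l r1 < i := Nat.find_spec hex
  have hr1min : ∀ r, r < r1 → i < beta l r := by
    intro r hr
    have h1 := Nat.find_min hex hr
    have h2 : beta l r ≠ i := fun hc => hni ⟨r, hc⟩
    omega
  have h01 : r1 ≤ r0 := Nat.find_le (by unfold beta at hr0 ⊢; omega)
  have htn : (((i + r1 + 1).toNat : ℤ)) = i + r1 + 1 := by
    have : (0:ℤ) ≤ i + r1 + 1 := by
      have : (0:ℤ) ≤ (l.rowLen r1 : ℤ) := by positivity
      unfold beta at hr1lt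
      omega
    exact Int.toNat_of_nonneg this
  have hr1b : (l.rowLen r1 : ℤ) ≤ i + r1 := by
    unfold beta at hr1lt; omega
  have hlowb : ∀ r, r < r1 → i + r + 2 ≤ (l.rowLen r : ℤ) := by
    intro r hr
    have := hr1min r hr
    unfold beta at this; omega
  set g : ℕ → ℕ := fun r => if r < r1 then l.rowLen r else if r = r1 then (i + r1 + 1).toNat
    else if r ≤ r0 then l.rowLen (r - 1) + 1 else l.rowLen r with hgdef
  have gval_low : ∀ r, r < r1 → g r = l.rowLen r := by
    intro r hr; simp only [hgdef]; rw [if_pos hr]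
  have gval_r1 : g r1 = (i + r1 + 1).toNat := by
    simp only [hgdef]
    simp
  have gval_mid : ∀ r, r1 < r → r ≤ r0 → g r = l.rowLen (r - 1) + 1 := by
    intro r h1 h2; simp only [hgdef]
    rw [if_neg (by omega), if_neg (by omega), if_pos h2]
  have gval_high : ∀ r, r0 < r → g r = l.rowLen r := by
    intro r h1; simp only [hgdef]
    rw [if_neg (by omega), if_neg (by omega), if_neg (by omega)]
  have hanti : Antitone g := by
    apply antitone_nat_of_succ_le
    intro r
    rcases Nat.lt_or_ge (r + 1) r1 with hc1 | hc1
    · rw [gval_low _ hc1, gval_low _ (by omega)]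
      exact l.rowLen_anti r (r + 1) (by omega)
    rcases Nat.eq_or_lt_of_le hc1 with hc2 | hc2
    · rw [← hc2, gval_r1, gval_low _ (by omega)]
      have := hlowb r (by omega)
      omega
    rcases Nat.lt_or_ge r r1 with hc3 | hc3
    · omega
    rcases Nat.eq_or_lt_of_le hc3 with hc4 | hc4
    · -- r = r1
      rcases Nat.lt_or_ge r0 (r + 1) with hc5 | hc5
      · rw [gval_high _ hc5, ← hc4, gval_r1]
        have h9 := l.rowLen_anti r1 (r1 + 1) (by omega)
        omega
      · rw [gval_mid _ (by omega) hc5, ← hc4, gval_r1]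
        have hss : r1 + 1 - 1 = r1 := by omega
        rw [hss]
        omega
    · -- r1 < r
      rcases Nat.lt_or_ge r0 r with hc5 | hc5
      · rw [gval_high _ hc5, gval_high _ (by omega)]
        exact l.rowLen_anti r (r + 1) (by omega)
      rcases Nat.lt_or_ge r0 (r + 1) with hc6 | hc6
      · -- r = r0
        rw [gval_high _ hc6, gval_mid _ hc4 hc5]
        have := l.rowLen_anti (r - 1) (r + 1) (by omega)
        omega
      · rw [gval_mid _ (by omega) hc6, gval_mid _ hc4 hc5]
        have hss : r + 1 - 1 = r := by omega
        rw [hss]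
        have := l.rowLen_anti (r - 1) r (by omega)
        omega
  set R := max (l.colLen 0) (r0 + 1) with hRdef
  have hzero : ∀ r, R ≤ r → g r = 0 := by
    intro r hr
    rw [gval_high _ (by omega)]
    exact rowLen_zero_of_ge (by omega)
  refine ⟨ofFn g hanti R hzero, r1, r0, ?_, ?_, ?_, ?_, ?_, ?_, ?_⟩
  · exact h01
  · intro r h1 h2
    rw [ofFn_rowLen]
    rcases Nat.eq_or_lt_of_le h1 with hc | hc
    · rw [← hc, gval_r1]
      omega
    · rw [gval_mid _ hc h2]
      have := l.rowLen_anti (r - 1) r (by omega)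
      omega
  · intro r hr
    rw [ofFn_rowLen, gval_low _ hr]
  · intro r hr
    rw [ofFn_rowLen, gval_high _ hr]
  · intro r h1 h2
    rw [ofFn_rowLen, gval_mid _ (by omega) (by omega)]
    have hss : r + 1 - 1 = r := by omega
    rw [hss]
  · rw [ofFn_rowLen, gval_r1]
    omega
  · unfold beta at hr0
    omega

lemma exists_ribbon {n : ℕ} (hn : 1 ≤ n) {l : YoungDiagram} {i : ℤ} (hA : App n i l) :
    ∃ m, IsRibbon n l m i := by
  obtain ⟨m, r1, r0, D⟩ := exists_desc hn hA
  exact ⟨m, D.isRibbon⟩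

lemma ribbon_app {n : ℕ} {l m : YoungDiagram} {i : ℤ} (h : IsRibbon n l m i) : App n i l := by
  obtain ⟨r1, r0, D⟩ := isRibbon_desc h
  exact D.app

lemma ribbon_occ {n : ℕ} {l m : YoungDiagram} {i : ℤ} (h : IsRibbon n l m i) :
    ∀ d, Occ m d ↔ ((Occ l d ∧ d ≠ i - n) ∨ d = i) := by
  obtain ⟨r1, r0, D⟩ := isRibbon_desc h
  exact D.occ_m_iff

lemma ribbon_unique {n : ℕ} {l m m' : YoungDiagram} {i : ℤ}
    (h : IsRibbon n l m i) (h' : IsRibbon n l m' i) : m = m' := by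
  apply eq_of_occ_eq
  intro d
  rw [ribbon_occ h d, ribbon_occ h' d]

lemma ribbon_spin {n : ℕ} {l m : YoungDiagram} {i : ℤ} (h : IsRibbon n l m i) :
    spin l m = spinCount n i l := by
  obtain ⟨r1, r0, D⟩ := isRibbon_desc h
  rw [D.spin_eq, D.spinCount_eq]

end RS
namespace RS
open Finset

lemma q_ne_zero : (q : K) ≠ 0 := RatFunc.X_ne_zero

lemma u_single (n : ℕ) (i : ℤ) (l : YoungDiagram) (c : K) :
    u n i (Finsupp.single l c) = c • uVec n i l := by
  unfold u
  rw [Finsupp.lsum_single]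
  simp [LinearMap.toSpanSingleton]

lemma uVec_eq {n : ℕ} {i : ℤ} {l m : YoungDiagram} (h : IsRibbon n l m i) :
    uVec n i l = q ^ spin l m • Finsupp.single m 1 := by
  unfold uVec
  have hex : ∃ mu, IsRibbon n l mu i := ⟨m, h⟩
  rw [dif_pos hex]
  have h2 : Classical.choose hex = m := ribbon_unique (Classical.choose_spec hex) h
  rw [h2]

lemma uVec_zero {n : ℕ} {i : ℤ} {l : YoungDiagram} (h : ¬ App n i l) : uVec n i l = 0 := by
  unfold uVec
  rw [dif_neg]
  rintro ⟨m, hm⟩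
  exact h (ribbon_app hm)

lemma u_apply_ribbon {n : ℕ} {i : ℤ} {l m : YoungDiagram} (h : IsRibbon n l m i) :
    u n i (Finsupp.single l 1) = q ^ spin l m • Finsupp.single m 1 := by
  rw [u_single, uVec_eq h, one_smul]

lemma u_apply_zero {n : ℕ} {i : ℤ} {l : YoungDiagram} (h : ¬ App n i l) :
    u n i (Finsupp.single l 1) = 0 := by
  rw [u_single, uVec_zero h, smul_zero]

/-- exponent appearing in the `q`-commutation of `u i` and `u j` -/
def ee (n : ℕ) (i j : ℤ) : ℤ :=
  ((if (i - n < j ∧ j < i) then (1:ℤ) else 0) - (if (i - n < j - n ∧ j - n < i) then 1 else 0))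
  - ((if (j - n < i ∧ i < j) then (1:ℤ) else 0) - (if (j - n < i - n ∧ i - n < j) then 1 else 0))

lemma card_filter_flip (S : Finset ℤ) (P P' : ℤ → Prop) (a b : ℤ)
    (hP' : ∀ d, P' d ↔ ((P d ∧ d ≠ a) ∨ d = b)) (hPa : P a) (hPb : ¬ P b) :
    ((S.filter P').card : ℤ) = ((S.filter P).card : ℤ)
      - (if a ∈ S then 1 else 0) + (if b ∈ S then 1 else 0) := by
  classical
  have hsplit : S.filter P' = ((S.filter P).erase a) ∪ S.filter (fun d => d = b) := by
    ext d
    simp only [Finset.mem_filter, Finset.mem_union, Finset.mem_erase, hP']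
    constructor
    · rintro ⟨hdS, (⟨hPd, hda⟩ | rfl)⟩
      · exact Or.inl ⟨hda, hdS, hPd⟩
      · exact Or.inr ⟨hdS, rfl⟩
    · rintro (⟨hda, hdS, hPd⟩ | ⟨hdS, rfl⟩)
      · exact ⟨hdS, Or.inl ⟨hPd, hda⟩⟩
      · exact ⟨hdS, Or.inr rfl⟩
  have hdisj : Disjoint ((S.filter P).erase a) (S.filter (fun d => d = b)) := by
    rw [Finset.disjoint_right]
    intro d hd hd2
    rw [Finset.mem_filter] at hd
    rw [Finset.mem_erase, Finset.mem_filter] at hd2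
    obtain ⟨_, rfl⟩ := hd
    exact hPb hd2.2.2
  rw [hsplit, Finset.card_union_of_disjoint hdisj]
  have h1 : (S.filter (fun d => d = b)).card = if b ∈ S then 1 else 0 := by
    split_ifs with hb
    · rw [Finset.filter_eq', if_pos hb, Finset.card_singleton]
    · rw [Finset.filter_eq', if_neg hb, Finset.card_empty]
  have h2 : ((S.filter P).erase a).card
      = (S.filter P).card - (if a ∈ S then 1 else 0) := by
    split_ifs with ha
    · exact Finset.card_erase_of_mem (Finset.mem_filter.mpr ⟨ha, hPa⟩)
    · rw [Finset.erase_eq_of_notMem (fun hc => ha (Finset.mem_filter.mp hc).1)]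
      omega
  have h3 : a ∈ S → 1 ≤ (S.filter P).card := by
    intro ha
    exact Finset.card_pos.mpr ⟨a, Finset.mem_filter.mpr ⟨ha, hPa⟩⟩
  rw [h1, h2]
  split_ifs with ha hb hb
  · have := h3 ha; push_cast; omega
  · have := h3 ha; push_cast; omega
  · push_cast; omega
  · push_cast; omega

lemma spinCount_move {n : ℕ} {i j : ℤ} {l m : YoungDiagram} (h : IsRibbon n l m j) :
    ((spinCount n i m : ℤ)) = (spinCount n i l : ℤ)
      - (if j - n ∈ Finset.Ioo (i - (n:ℤ)) i then 1 else 0)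
      + (if j ∈ Finset.Ioo (i - (n:ℤ)) i then 1 else 0) := by
  unfold spinCount
  exact card_filter_flip _ (Occ l) (Occ m) (j - n) j (ribbon_occ h)
    (ribbon_app h).1 (ribbon_app h).2

lemma occ_move_ne {n : ℕ} {j : ℤ} {l m : YoungDiagram} (h : IsRibbon n l m j) {d : ℤ}
    (h1 : d ≠ j - n) (h2 : d ≠ j) : (Occ m d ↔ Occ l d) := by
  rw [ribbon_occ h d]
  constructor
  · rintro (⟨hd, _⟩ | rfl)
    · exact hd
    · exact absurd rfl h2
  · intro hd
    exact Or.inl ⟨hd, h1⟩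

lemma app_move {n : ℕ} {i j : ℤ} {l m : YoungDiagram} (h : IsRibbon n l m j)
    (hd2 : i - (n:ℤ) ≠ j) (hd3 : i ≠ j - n) (hd4 : i ≠ j) :
    (App n i m ↔ App n i l) := by
  unfold App
  rw [occ_move_ne h (by omega) hd2, occ_move_ne h hd3 hd4]

lemma ribbon_n_pos {n : ℕ} {l m : YoungDiagram} {i : ℤ} (h : IsRibbon n l m i) : 1 ≤ n := by
  obtain ⟨r1, r0, D⟩ := isRibbon_desc h
  exact D.n_pos

end RS
namespace RS
open Finset

lemma u_swap {n : ℕ} (hn : 1 ≤ n) {i j : ℤ} (hd4 : i ≠ j) (hd2 : i ≠ j + n)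
    (hd3 : j ≠ i + n) :
    u n i * u n j = (q ^ (ee n i j) : K) • (u n j * u n i) := by
  apply Finsupp.lhom_ext
  intro a b
  rw [Module.End.mul_apply, LinearMap.smul_apply, Module.End.mul_apply]
  by_cases hAj : App n j a
  · obtain ⟨mj, hmj⟩ := exists_ribbon hn hAj
    by_cases hAi : App n i a
    · obtain ⟨mi, hmi⟩ := exists_ribbon hn hAi
      have hAij : App n i mj := (app_move hmj (by omega) (by omega) hd4).mpr hAi
      have hAji : App n j mi := (app_move hmi (by omega) (by omega) (Ne.symm hd4)).mpr hAj
      obtain ⟨mij, hmij⟩ := exists_ribbon hn hAij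
      obtain ⟨mji, hmji⟩ := exists_ribbon hn hAji
      have hocc : ∀ d, Occ mij d ↔ Occ mji d := by
        intro d
        rw [ribbon_occ hmij d, ribbon_occ hmj d, ribbon_occ hmji d, ribbon_occ hmi d]
        have F1 : i ≠ j - (n:ℤ) := by omega
        have F2 : j ≠ i - (n:ℤ) := by omega
        by_cases h1 : d = i <;> by_cases h2 : d = j
        · exact absurd (h1 ▸ h2) hd4
        · rw [h1]
          simp [F1, hd4, (show i ≠ i - (n:ℤ) by omega)]
        · rw [h2]
          simp [F2, Ne.symm hd4, (show j ≠ j - (n:ℤ) by omega)]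
        · simp only [h1, h2, or_false]
          tauto
      have meq : mij = mji := eq_of_occ_eq hocc
      rw [u_single, uVec_eq hmj, map_smul, map_smul, u_apply_ribbon hmij,
        u_single n i, uVec_eq hmi, map_smul, map_smul, u_apply_ribbon hmji]
      rw [smul_smul, smul_smul, smul_smul, smul_smul, smul_smul]
      have hq : (q:K) ^ (spin a mj) * q ^ (spin mj mij)
          = q ^ (ee n i j) * ((q:K) ^ (spin a mi) * q ^ (spin mi mji)) := by
        have hcast : ((spin a mj + spin mj mij : ℕ) : ℤ)
            = ee n i j + ((spin a mi + spin mi mji : ℕ) : ℤ) := by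
          have hs1 : spin a mj = spinCount n j a := ribbon_spin hmj
          have ht1 : spin a mi = spinCount n i a := ribbon_spin hmi
          have hs2' : spin mj mij = spinCount n i mj := ribbon_spin hmij
          have ht2' : spin mi mji = spinCount n j mi := ribbon_spin hmji
          have hs2 : ((spinCount n i mj : ℤ)) = (spinCount n i a : ℤ)
              - (if j - n ∈ Finset.Ioo (i - (n:ℤ)) i then 1 else 0)
              + (if j ∈ Finset.Ioo (i - (n:ℤ)) i then 1 else 0) := spinCount_move hmj
          have ht2 : ((spinCount n j mi : ℤ)) = (spinCount n j a : ℤ)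
              - (if i - n ∈ Finset.Ioo (j - (n:ℤ)) j then 1 else 0)
              + (if i ∈ Finset.Ioo (j - (n:ℤ)) j then 1 else 0) := spinCount_move hmi
          simp only [Finset.mem_Ioo] at hs2 ht2
          rw [hs1, ht1, hs2', ht2']
          unfold ee
          push_cast
          split_ifs at hs2 ht2 ⊢ <;> omega
        calc (q:K) ^ (spin a mj) * q ^ (spin mj mij)
            = q ^ (spin a mj + spin mj mij) := by rw [pow_add]
          _ = q ^ ((spin a mj + spin mj mij : ℕ) : ℤ) := by rw [zpow_natCast]
          _ = q ^ (ee n i j + ((spin a mi + spin mi mji : ℕ) : ℤ)) := by rw [hcast]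
          _ = q ^ (ee n i j) * q ^ ((spin a mi + spin mi mji : ℕ) : ℤ) :=
              zpow_add₀ q_ne_zero _ _
          _ = q ^ (ee n i j) * ((q:K) ^ (spin a mi) * q ^ (spin mi mji)) := by
              rw [zpow_natCast, pow_add]
      have hscal : b * (q:K) ^ (spin a mj) * q ^ (spin mj mij)
          = q ^ (ee n i j) * b * (q:K) ^ (spin a mi) * q ^ (spin mi mji) := by
        linear_combination b * hq
      rw [hscal, meq]
    · have hnAij : ¬ App n i mj := fun hc => hAi ((app_move hmj (by omega) (by omega) hd4).mp hc)
      simp only [u_single, uVec_eq hmj, uVec_zero hAi, uVec_zero hnAij, map_smul,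
        smul_zero, map_zero]
  · by_cases hAi : App n i a
    · obtain ⟨mi, hmi⟩ := exists_ribbon hn hAi
      have hnAji : ¬ App n j mi := fun hc =>
        hAj ((app_move hmi (by omega) (by omega) (Ne.symm hd4)).mp hc)
      simp only [u_single, uVec_zero hAj, uVec_eq hmi, uVec_zero hnAji, map_smul,
        smul_zero, map_zero]
    · simp only [u_single, uVec_zero hAj, uVec_zero hAi, smul_zero, map_zero]

end RS
namespace RS
open Finset

/-- monomial in application order (head of the list applied first) -/
def amon (n : ℕ) (r : List ℤ) : Module.End K F := ribbonMonomial n r.reverse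

lemma amon_nil (n : ℕ) : amon n [] = 1 := rfl

lemma amon_cons (n : ℕ) (x : ℤ) (r : List ℤ) : amon n (x :: r) = amon n r * u n x := by
  unfold amon ribbonMonomial
  rw [List.reverse_cons, List.map_append, List.prod_append]
  simp

inductive Sem (n : ℕ) : List ℤ → YoungDiagram → YoungDiagram → ℕ → Prop
  | nil (l : YoungDiagram) : Sem n [] l l 0
  | cons {i : ℤ} {r : List ℤ} {l m nu : YoungDiagram} {s : ℕ} :
      IsRibbon n l m i → Sem n r m nu s → Sem n (i :: r) l nu (spin l m + s)

lemma amon_sem {n : ℕ} {r : List ℤ} {l nu : YoungDiagram} {s : ℕ} (h : Sem n r l nu s) :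
    amon n r (Finsupp.single l 1) = q ^ s • Finsupp.single nu 1 := by
  induction h with
  | nil l => simp [amon_nil]
  | cons hrib hsem ih =>
    rw [amon_cons, Module.End.mul_apply, u_apply_ribbon hrib, map_smul, ih,
      smul_smul, ← pow_add]

lemma amon_ne {n : ℕ} (hn : 1 ≤ n) : ∀ (r : List ℤ) (l : YoungDiagram),
    amon n r (Finsupp.single l 1) ≠ 0 → ∃ nu s, Sem n r l nu s := by
  intro r
  induction r with
  | nil => intro l _; exact ⟨l, 0, Sem.nil l⟩
  | cons x r ih =>
    intro l hne
    rw [amon_cons, Module.End.mul_apply] at hne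
    by_cases hA : App n x l
    · obtain ⟨m, hm⟩ := exists_ribbon hn hA
      rw [u_apply_ribbon hm, map_smul] at hne
      have hne2 : amon n r (Finsupp.single m 1) ≠ 0 := by
        intro h0
        rw [h0, smul_zero] at hne
        exact hne rfl
      obtain ⟨nu, s, hsem⟩ := ih m hne2
      exact ⟨nu, spin l m + s, Sem.cons hm hsem⟩
    · rw [u_apply_zero hA, map_zero] at hne
      exact absurd rfl hne

lemma sem_unique {n : ℕ} {r : List ℤ} {l nu nu' : YoungDiagram} {s s' : ℕ}
    (h : Sem n r l nu s) (h' : Sem n r l nu' s') : nu = nu' ∧ s = s' := by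
  induction h generalizing nu' s' with
  | nil l => cases h'; exact ⟨rfl, rfl⟩
  | cons hrib hsem ih =>
    cases h' with
    | cons hrib' hsem' =>
      have hmeq := ribbon_unique hrib hrib'
      rw [← hmeq] at hsem'
      obtain ⟨h1, h2⟩ := ih hsem'
      refine ⟨h1, ?_⟩
      rw [← hmeq]
      omega

lemma sem_count {n : ℕ} {r : List ℤ} {l nu : YoungDiagram} {s : ℕ} (h : Sem n r l nu s)
    (d : ℤ) : (r.count d : ℤ) - (r.count (d + n) : ℤ)
      = (if Occ nu d then 1 else 0) - (if Occ l d then 1 else 0) := by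
  induction h with
  | nil l => simp
  | @cons i r l m nu s hrib hsem ih =>
    have happ := ribbon_app hrib
    have hnn := ribbon_n_pos hrib
    have hkey : (if d = i then (1:ℤ) else 0) - (if d + n = i then 1 else 0)
        = (if Occ m d then 1 else 0) - (if Occ l d then 1 else 0) := by
      by_cases h1 : d = i
      · rw [h1]
        have hOm : Occ m i := (ribbon_occ hrib i).mpr (Or.inr rfl)
        simp [hOm, happ.2, (show i + (n:ℤ) ≠ i by omega)]
      · by_cases h2 : d + n = i
        · have hd : d = i - n := by omega
          have hOm : ¬ Occ m d := by
            rw [ribbon_occ hrib d]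
            rintro (⟨_, hne2⟩ | hdi)
            · exact hne2 hd
            · omega
          have hOl : Occ l d := hd ▸ happ.1
          simp [h1, h2, hOm, hOl]
        · have hiff := occ_move_ne hrib (d := d) (by omega) h1
          simp [h1, h2, hiff]
    have hc1 : (((i :: r).count d : ℕ) : ℤ) = (r.count d : ℤ) + (if d = i then 1 else 0) := by
      rw [List.count_cons]
      simp only [beq_iff_eq]
      split_ifs <;> push_cast <;> omega
    have hc2 : (((i :: r).count (d + n) : ℕ) : ℤ)
        = (r.count (d + n) : ℤ) + (if d + n = i then 1 else 0) := by
      rw [List.count_cons]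
      simp only [beq_iff_eq]
      split_ifs <;> push_cast <;> omega
    rw [hc1, hc2]
    linarith [ih, hkey]

lemma count_ev_zero (r : List ℤ) : ∃ B : ℤ, ∀ y : ℤ, B ≤ y → r.count y = 0 := by
  induction r with
  | nil => exact ⟨0, fun y _ => by simp⟩
  | cons x r ih =>
    obtain ⟨B, hB⟩ := ih
    refine ⟨max B (x + 1), fun y hy => ?_⟩
    have h1 : r.count y = 0 := hB y (le_trans (le_max_left B (x + 1)) hy)
    have h2 : y ≠ x := by
      have := le_max_right B (x + 1)
      omega
    rw [List.count_cons, h1]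
    have h3 : ¬ x = y := fun hc => h2 hc.symm
    simp [h3]

lemma per_zero {n : ℕ} (hn : 1 ≤ n) (fz : ℤ → ℤ) (hper : ∀ d, fz d = fz (d + n))
    (B : ℤ) (hB : ∀ y, B ≤ y → fz y = 0) : ∀ d, fz d = 0 := by
  intro d
  have hiter : ∀ k : ℕ, fz d = fz (d + k * n) := by
    intro k
    induction k with
    | zero => simp
    | succ k ih =>
      rw [ih, hper (d + k * n)]
      congr 1
      push_cast
      ring
  have hk := hiter ((B - d).toNat + 1)
  rw [hk]
  apply hB
  have h1 : (B - d : ℤ) ≤ ((B - d).toNat : ℤ) := Int.self_le_toNat (B - d)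
  have h2 : (((B - d).toNat : ℤ) + 1) * 1 ≤ (((B - d).toNat : ℤ) + 1) * n := by
    apply mul_le_mul_of_nonneg_left
    · exact_mod_cast hn
    · positivity
  push_cast
  nlinarith [h1, h2]

lemma sem_count_eq {n : ℕ} (hn : 1 ≤ n) {r r' : List ℤ} {l nu : YoungDiagram} {s s' : ℕ}
    (h : Sem n r l nu s) (h' : Sem n r' l nu s') : ∀ d, r.count d = r'.count d := by
  obtain ⟨B1, hB1⟩ := count_ev_zero r
  obtain ⟨B2, hB2⟩ := count_ev_zero r'
  have hz := per_zero hn (fun d => (r.count d : ℤ) - r'.count d)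
    (fun d => by
      have e1 := sem_count h d
      have e2 := sem_count h' d
      omega)
    (max B1 B2)
    (fun y hy => by
      have hy1 : B1 ≤ y := le_trans (le_max_left B1 B2) hy
      have hy2 : B2 ≤ y := le_trans (le_max_right B1 B2) hy
      rw [hB1 y hy1, hB2 y hy2]
      simp)
  intro d
  have := hz d
  omega

lemma mem_split_first {x : ℤ} : ∀ (r : List ℤ), x ∈ r → ∃ a b, r = a ++ x :: b ∧ x ∉ a := by
  intro r
  induction r with
  | nil => intro h; simp at h
  | cons y r ih =>
    intro hx
    by_cases hxy : x = y
    · exact ⟨[], r, by rw [hxy]; rfl, by simp⟩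
    · have hxr : x ∈ r := by
        rcases List.mem_cons.mp hx with h | h
        · exact absurd h hxy
        · exact h
      obtain ⟨a, b, rfl, hna⟩ := ih hxr
      exact ⟨y :: a, b, rfl, by simp [hxy, hna]⟩

lemma end_mul_smul (k : K) (A B : Module.End K F) : A * (k • B) = k • (A * B) := by
  refine LinearMap.ext fun v => ?_
  rw [Module.End.mul_apply, LinearMap.smul_apply, LinearMap.smul_apply,
    Module.End.mul_apply, map_smul]

lemma bubble {n : ℕ} (hn : 1 ≤ n) : ∀ (a : List ℤ) (b : List ℤ) (j : ℤ)
    (l nu : YoungDiagram) (s : ℕ),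
    Sem n (a ++ j :: b) l nu s → App n j l → j ∉ a →
    ∃ c : ℤ, amon n (a ++ j :: b) = (q ^ c : K) • amon n (j :: (a ++ b)) := by
  intro a
  induction a with
  | nil =>
    intro b j l nu s _ _ _
    exact ⟨0, by simp⟩
  | cons x a ih =>
    intro b j l nu s hsem hApp hnot
    have hja : j ∉ a := fun hc => hnot (List.mem_cons.mpr (Or.inr hc))
    have hjx : j ≠ x := fun hc => hnot (List.mem_cons.mpr (Or.inl hc))
    cases hsem with
    | @cons _ _ _ m _ s1 hrib hsem' =>
      have hAppx : App n x l := ribbon_app hrib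
      have hxjn : x ≠ j + n := by
        intro hc
        have hthis := hAppx.1
        rw [hc] at hthis
        have hxx : (j:ℤ) + n - n = j := by ring
        rw [hxx] at hthis
        exact hApp.2 hthis
      have hxjm : x ≠ j - n := by
        intro hc
        have hthis := hAppx.2
        rw [hc] at hthis
        exact hthis hApp.1
      have hAppm : App n j m := by
        rw [app_move hrib (by omega) (by omega) hjx]
        exact hApp
      obtain ⟨c, hc⟩ := ih b j m nu s1 hsem' hAppm hja
      refine ⟨c + ee n j x, ?_⟩
      have hswap : u n j * u n x = (q ^ (ee n j x) : K) • (u n x * u n j) :=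
        u_swap hn hjx (by omega) (by omega)
      calc amon n ((x :: a) ++ j :: b) = amon n (a ++ j :: b) * u n x := by
            rw [show ((x :: a) ++ j :: b) = x :: (a ++ j :: b) from rfl, amon_cons]
        _ = ((q ^ c : K) • amon n (j :: (a ++ b))) * u n x := by rw [hc]
        _ = (q ^ c : K) • (amon n (a ++ b) * (u n j * u n x)) := by
            rw [amon_cons, smul_mul_assoc, mul_assoc]
        _ = (q ^ c : K) • (amon n (a ++ b) * ((q ^ (ee n j x) : K) • (u n x * u n j))) := by
            rw [hswap]
        _ = (q ^ (c + ee n j x) : K) • (amon n (a ++ b) * u n x * u n j) := by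
            rw [end_mul_smul, smul_smul, ← zpow_add₀ q_ne_zero, ← mul_assoc]
        _ = (q ^ (c + ee n j x) : K) • amon n (j :: x :: (a ++ b)) := by
            rw [amon_cons, amon_cons]

lemma core {n : ℕ} (hn : 1 ≤ n) : ∀ (r' r : List ℤ) (l nu : YoungDiagram) (s s' : ℕ),
    Sem n r l nu s → Sem n r' l nu s' →
    ∃ e : ℤ, amon n r = (q ^ e : K) • amon n r' := by
  intro r'
  induction r' with
  | nil =>
    intro r l nu s s' h h'
    cases h'
    have hcnt := sem_count_eq hn h (Sem.nil (n := n) l)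
    have hrnil : r = [] := by
      cases r with
      | nil => rfl
      | cons y r =>
        exfalso
        have hcy := hcnt y
        simp [List.count_cons] at hcy
    subst hrnil
    exact ⟨0, by simp⟩
  | cons j r' ih =>
    intro r l nu s s' h h'
    have hcnt := sem_count_eq hn h h'
    have hjmem : j ∈ r := by
      have hcy := hcnt j
      simp [List.count_cons] at hcy
      exact List.count_pos_iff.mp (by omega)
    obtain ⟨a, b, rfl, hna⟩ := mem_split_first r hjmem
    cases h' with
    | @cons _ _ _ m _ s2 hrib hsem' =>
      have hApp := ribbon_app hrib
      obtain ⟨c, hc⟩ := bubble hn a b j l nu s h hApp hna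
      have hval := amon_sem h
      have happly : amon n (a ++ j :: b) (Finsupp.single l 1)
          = (q ^ c : K) • amon n (j :: (a ++ b)) (Finsupp.single l 1) := by
        rw [hc]; rfl
      have hval2 : amon n (j :: (a ++ b)) (Finsupp.single l 1) ≠ 0 := by
        intro h0
        rw [h0, smul_zero, hval] at happly
        have hasd := congrArg (fun f : F => f nu) happly
        simp [Finsupp.single_apply] at hasd
        exact q_ne_zero hasd.1
      obtain ⟨nu2, s2', hsem2⟩ := amon_ne hn _ _ hval2
      have hval3 := amon_sem hsem2
      have happ2 : (q ^ s : K) • Finsupp.single nu (1:K)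
          = (q ^ c : K) • ((q ^ s2' : K) • Finsupp.single nu2 (1:K)) := by
        rw [← hval, ← hval3, happly]
      have hnu : nu2 = nu := by
        rw [smul_smul, Finsupp.smul_single', Finsupp.smul_single', mul_one, mul_one] at happ2
        rcases (Finsupp.single_eq_single_iff _ _ _ _).mp happ2 with ⟨h1, _⟩ | ⟨h1, _⟩
        · exact h1.symm
        · exact absurd h1 (pow_ne_zero _ q_ne_zero)
      cases hsem2 with
      | @cons _ _ _ m2 _ s3 hrib2 hsem3 =>
        have hm2 : m2 = m := ribbon_unique hrib2 hrib
        rw [hm2, hnu] at hsem3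
        obtain ⟨e, he⟩ := ih (a ++ b) m nu s3 s2 hsem3 hsem'
        refine ⟨c + e, ?_⟩
        calc amon n (a ++ j :: b) = (q ^ c : K) • amon n (j :: (a ++ b)) := hc
          _ = (q ^ c : K) • (amon n (a ++ b) * u n j) := by rw [amon_cons]
          _ = (q ^ c : K) • (((q ^ e : K) • amon n r') * u n j) := by rw [he]
          _ = (q ^ (c + e) : K) • (amon n r' * u n j) := by
              rw [smul_mul_assoc, smul_smul, ← zpow_add₀ q_ne_zero]
          _ = (q ^ (c + e) : K) • amon n (j :: r') := by rw [amon_cons]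

end RS
/-- if two monomials in ribbon Schur operators satisfy
`u · μ = q^t v · μ ≠ 0` for some partition `μ`, then `u = q^t v` as operators on `F`. -/
theorem ribbon_monomial_determined (n : ℕ) (hn : 1 ≤ n) (l l' : List ℤ) (t : ℤ)
    (mu : YoungDiagram)
    (h : ribbonMonomial n l (Finsupp.single mu 1) =
      q ^ t • ribbonMonomial n l' (Finsupp.single mu 1))
    (hne : ribbonMonomial n l (Finsupp.single mu 1) ≠ 0) :
    ribbonMonomial n l = q ^ t • ribbonMonomial n l' := by
  have hm1 : ribbonMonomial n l = RS.amon n l.reverse := by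
    unfold RS.amon
    rw [List.reverse_reverse]
  have hm2 : ribbonMonomial n l' = RS.amon n l'.reverse := by
    unfold RS.amon
    rw [List.reverse_reverse]
  rw [hm1] at h hne ⊢
  rw [hm2] at h ⊢
  obtain ⟨nu, s, hs⟩ := RS.amon_ne hn _ _ hne
  have hne' : RS.amon n l'.reverse (Finsupp.single mu 1) ≠ 0 := by
    intro h0
    rw [h0, smul_zero] at h
    exact hne h
  obtain ⟨nu', s', hs'⟩ := RS.amon_ne hn _ _ hne'
  have hv := RS.amon_sem hs
  have hv' := RS.amon_sem hs'
  have h2 := h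
  rw [hv, hv', smul_smul, Finsupp.smul_single', Finsupp.smul_single', mul_one, mul_one] at h2
  rcases (Finsupp.single_eq_single_iff _ _ _ _).mp h2 with ⟨hnu, hq⟩ | ⟨h1, _⟩
  swap
  · exact absurd h1 (pow_ne_zero _ RS.q_ne_zero)
  rw [← hnu] at hs'
  obtain ⟨e, he⟩ := RS.core hn l'.reverse l.reverse mu nu s s' hs hs'
  have happly : RS.amon n l.reverse (Finsupp.single mu 1)
      = (q ^ e : K) • RS.amon n l'.reverse (Finsupp.single mu 1) := by
    rw [he]; rfl
  rw [hv, hv'] at happly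
  rw [← hnu] at happly
  rw [smul_smul, Finsupp.smul_single', Finsupp.smul_single', mul_one, mul_one] at happly
  rcases (Finsupp.single_eq_single_iff _ _ _ _).mp happly with ⟨_, hq2⟩ | ⟨h1, _⟩
  swap
  · exact absurd h1 (pow_ne_zero _ RS.q_ne_zero)
  have hqe : (q ^ e : K) = q ^ t := by
    have hne2 : (q:K) ^ s' ≠ 0 := pow_ne_zero _ RS.q_ne_zero
    exact mul_right_cancel₀ hne2 (hq2.symm.trans hq)
  rw [he, hqe]

end RibbonSchur
end

section
/- For n = 1: if two monomials in the box-adding operators u_i both map a partition μ to the same partition λ (nonzero), then the multisets of indices appearing in the two monomials are equal; in particular the monomials have the same length. -/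
open scoped Classical

noncomputable section RibbonSchur

lemma u_single (i : ℤ) (ν : YoungDiagram) :
    u 1 i (Finsupp.single ν 1) = uVec 1 i ν := by
  simp [u, Finsupp.lsum_single, LinearMap.toSpanSingleton_apply]

lemma uVec_single {ν : YoungDiagram} {i : ℤ} (h : ∃ μ', IsRibbon 1 ν μ' i) :
    ∃ μ' p, uVec 1 i ν = Finsupp.single μ' 1 ∧ ν ≤ μ' ∧
      skewCells ν μ' = {p} ∧ ((p.2 : ℤ) - p.1 = i) := by
  obtain ⟨hle, hcard, -, -, p0, hp0, hp0i, -⟩ := Classical.choose_spec h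
  set μ' := Classical.choose h with hμ'
  obtain ⟨p, hp⟩ := Finset.card_eq_one.mp hcard
  have hp0p : p0 = p := by rw [hp] at hp0; simpa using hp0
  refine ⟨μ', p, ?_, hle, hp, hp0p ▸ hp0i⟩
  have hspin : spin ν μ' = 0 := by simp [spin, hp]
  simp [uVec, ← hμ', h, hspin]

lemma monomial_step (l : List ℤ) : ∀ mu : YoungDiagram,
    ribbonMonomial 1 l (Finsupp.single mu 1) = 0 ∨
    ∃ nu : YoungDiagram, ribbonMonomial 1 l (Finsupp.single mu 1) = Finsupp.single nu 1 ∧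
      mu ≤ nu ∧ (l : Multiset ℤ) =
        (skewCells mu nu).val.map (fun p => (p.2 : ℤ) - (p.1 : ℤ)) := by
  induction l with
  | nil =>
    intro mu
    exact Or.inr ⟨mu, by simp [ribbonMonomial], le_refl _, by simp [skewCells]⟩
  | cons i t ih =>
    intro mu
    have hrec : ribbonMonomial 1 (i :: t) (Finsupp.single mu 1)
        = u 1 i (ribbonMonomial 1 t (Finsupp.single mu 1)) := by
      simp [ribbonMonomial, Module.End.mul_apply]
    rcases ih mu with h0 | ⟨ν, hν, hle, hmul⟩
    · left; rw [hrec, h0, map_zero]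
    · rw [hrec, hν, u_single]
      by_cases h : ∃ μ', IsRibbon 1 ν μ' i
      · obtain ⟨μ', p, heq, hle', hskew, hcont⟩ := uVec_single h
        right
        refine ⟨μ', heq, le_trans hle hle', ?_⟩
        have hpmem : p ∈ skewCells ν μ' := by rw [hskew]; exact Finset.mem_singleton_self p
        rw [skewCells, Finset.mem_sdiff] at hpmem
        have hpnotmu : p ∉ mu.cells := fun hx =>
          hpmem.2 (YoungDiagram.cells_subset_iff.mpr hle hx)
        have hcells : skewCells mu μ' = insert p (skewCells mu ν) := by
          ext x
          simp only [skewCells, Finset.mem_sdiff, Finset.mem_insert]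
          constructor
          · rintro ⟨hxμ', hxmu⟩
            by_cases hxν : x ∈ ν.cells
            · exact Or.inr ⟨hxν, hxmu⟩
            · have : x ∈ skewCells ν μ' := by
                rw [skewCells, Finset.mem_sdiff]; exact ⟨hxμ', hxν⟩
              rw [hskew] at this
              exact Or.inl (Finset.mem_singleton.mp this)
          · rintro (rfl | ⟨hxν, hxmu⟩)
            · exact ⟨hpmem.1, hpnotmu⟩
            · exact ⟨YoungDiagram.cells_subset_iff.mpr hle' hxν, hxmu⟩
        have hpnot : p ∉ skewCells mu ν := by
          intro hx
          exact hpmem.2 ((Finset.sdiff_subset) hx)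
        rw [hcells, Finset.insert_val_of_notMem hpnot, Multiset.map_cons, hcont]
        rw [← hmul]
        rfl
      · left; simp [uVec, h]

/-- for `n = 1`, if two monomials in the box-adding operators both map `μ`
to the same partition `λ` (nonzero), then their multisets of indices coincide; in
particular the monomials have the same length. -/
theorem box_monomial_multiset_eq (l l' : List ℤ) (mu lam : YoungDiagram)
    (h1 : ribbonMonomial 1 l (Finsupp.single mu 1) = Finsupp.single lam 1)
    (h2 : ribbonMonomial 1 l' (Finsupp.single mu 1) = Finsupp.single lam 1) :
    (l : Multiset ℤ) = (l' : Multiset ℤ) ∧ l.length = l'.length := by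
  have key : ∀ (L : List ℤ), ribbonMonomial 1 L (Finsupp.single mu 1) = Finsupp.single lam 1 →
      (L : Multiset ℤ) = (skewCells mu lam).val.map (fun p => (p.2 : ℤ) - (p.1 : ℤ)) := by
    intro L hL
    rcases monomial_step L mu with h0 | ⟨nu, hnu, -, hmul⟩
    · rw [h0] at hL
      exact absurd (Finsupp.single_eq_zero.mp hL.symm) one_ne_zero
    · rw [hL] at hnu
      have : nu = lam := Finsupp.single_left_injective one_ne_zero hnu.symm
      rwa [this] at hmul
  have h1' := key l h1
  have h2' := key l' h2
  have hm : (l : Multiset ℤ) = (l' : Multiset ℤ) := h1'.trans h2'.symm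
  refine ⟨hm, ?_⟩
  have := congrArg Multiset.card hm
  simpa using this


end RibbonSchur
end
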